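/- arXiv:2004.04330 — 6 statements merged into one kernel-verified Lean document; each statement's English description precedes it below -/
import Mathlib

section
/- For finite sets and a joint PMF P on U × V × X × Y × Z factoring as P_{U,V} P_{X|V} P_{Y,Z|X} (i.e., U−V−X−(Y,Z) is a Markov chain), if Y is less noisy than Z in the sense that I(W;Y) ≥ I(W;Z) holds for all random variables W with W−X−(Y,Z) a Markov chain, then I(V;Y|U) − I(V;Z|U) ≤ I(X;Y) − I(X;Z). -/
open scoped BigOperators
open Finset

/-- Mutual information `I(A;B)` (in bits) of a joint PMF `p` on `A × B`. -/
noncomputable def miJ {A B : Type*} [Fintype A] [Fintype B] (p : A → B → ℝ) : ℝ :=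
  ∑ a, ∑ b, p a b * Real.logb 2 (p a b / ((∑ b', p a b') * (∑ a', p a' b)))

/-- Conditional mutual information `I(A;B|C)` (in bits) of a joint PMF `p` on `A × B × C`. -/
noncomputable def cmiJ {A B C : Type*} [Fintype A] [Fintype B] [Fintype C]
    (p : A → B → C → ℝ) : ℝ :=
  ∑ a, ∑ b, ∑ c, p a b c *
    Real.logb 2 ((p a b c * (∑ a', ∑ b', p a' b' c)) /
      ((∑ b', p a b' c) * (∑ a', p a' b c)))

lemma sum3_cyc {A B C : Type} [Fintype A] [Fintype B] [Fintype C] (f : A → B → C → ℝ) :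
    ∑ a, ∑ b, ∑ c, f a b c = ∑ b, ∑ c, ∑ a, f a b c :=
  Finset.sum_comm.trans (Finset.sum_congr rfl fun _ _ => Finset.sum_comm)

lemma sum3_cyc' {A B C : Type} [Fintype A] [Fintype B] [Fintype C] (f : A → B → C → ℝ) :
    ∑ a, ∑ b, ∑ c, f a b c = ∑ c, ∑ a, ∑ b, f a b c :=
  (sum3_cyc fun x y z => f y z x).symm

lemma sum4_swap {A B C D : Type} [Fintype A] [Fintype B] [Fintype C] [Fintype D]
    (f : A → B → C → D → ℝ) :
    ∑ a, ∑ b, ∑ c, ∑ d, f a b c d = ∑ c, ∑ d, ∑ a, ∑ b, f a b c d :=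
  (Finset.sum_congr rfl fun a _ => sum3_cyc (f a)).trans (sum3_cyc fun a c d => ∑ b, f a b c d)

lemma le_sum2 {U V : Type} [Fintype U] [Fintype V] (f : U → V → ℝ)
    (h : ∀ u v, 0 ≤ f u v) (u : U) (v : V) : f u v ≤ ∑ u, ∑ v, f u v :=
  le_trans (Finset.single_le_sum (fun v _ => h u v) (Finset.mem_univ v))
    (Finset.single_le_sum (fun u _ => Finset.sum_nonneg fun v _ => h u v) (Finset.mem_univ u))

/-- miJ on the (X,B) marginal as a quadruple sum. -/
lemma miJ_quadXB {U V X B : Type} [Fintype U] [Fintype V] [Fintype X] [Fintype B]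
    (F : U → V → X → B → ℝ) :
    miJ (fun x b => ∑ u, ∑ v, F u v x b)
      = ∑ u, ∑ v, ∑ x, ∑ b, F u v x b *
          Real.logb 2 ((∑ u', ∑ v', F u' v' x b) /
            ((∑ b', ∑ u', ∑ v', F u' v' x b') * (∑ x', ∑ u', ∑ v', F u' v' x' b))) := by
  rw [miJ]
  refine Eq.trans ?_ (sum4_swap fun x b u v => F u v x b *
    Real.logb 2 ((∑ u', ∑ v', F u' v' x b) /
      ((∑ b', ∑ u', ∑ v', F u' v' x b') * (∑ x', ∑ u', ∑ v', F u' v' x' b))))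
  refine Finset.sum_congr rfl fun x _ => Finset.sum_congr rfl fun b _ => ?_
  rw [Finset.sum_mul]
  exact Finset.sum_congr rfl fun u _ => Finset.sum_mul _ _ _

/-- miJ on the (U,B) marginal as a quadruple sum. -/
lemma miJ_quadUB {U V X B : Type} [Fintype U] [Fintype V] [Fintype X] [Fintype B]
    (F : U → V → X → B → ℝ) :
    miJ (fun u b => ∑ v, ∑ x, F u v x b)
      = ∑ u, ∑ v, ∑ x, ∑ b, F u v x b *
          Real.logb 2 ((∑ v', ∑ x', F u v' x' b) /
            ((∑ b', ∑ v', ∑ x', F u v' x' b') * (∑ u', ∑ v', ∑ x', F u' v' x' b))) := by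
  rw [miJ]
  refine Finset.sum_congr rfl fun u _ => ?_
  refine Eq.trans ?_ (sum3_cyc fun b v x => F u v x b *
    Real.logb 2 ((∑ v', ∑ x', F u v' x' b) /
      ((∑ b', ∑ v', ∑ x', F u v' x' b') * (∑ u', ∑ v', ∑ x', F u' v' x' b))))
  refine Finset.sum_congr rfl fun b _ => ?_
  rw [Finset.sum_mul]
  exact Finset.sum_congr rfl fun v _ => Finset.sum_mul _ _ _

/-- cmiJ as a quadruple sum. -/
lemma cmiJ_quad {U V X B : Type} [Fintype U] [Fintype V] [Fintype X] [Fintype B]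
    (F : U → V → X → B → ℝ) :
    cmiJ (fun v b u => ∑ x, F u v x b)
      = ∑ u, ∑ v, ∑ x, ∑ b, F u v x b *
          Real.logb 2 (((∑ x', F u v x' b) * (∑ v', ∑ b', ∑ x', F u v' x' b')) /
            ((∑ b', ∑ x', F u v x' b') * (∑ v', ∑ x', F u v' x' b))) := by
  rw [cmiJ]
  refine Eq.trans ?_ ((sum4_swap fun v b u x => F u v x b *
    Real.logb 2 (((∑ x', F u v x' b) * (∑ v', ∑ b', ∑ x', F u v' x' b')) /
      ((∑ b', ∑ x', F u v x' b') * (∑ v', ∑ x', F u v' x' b)))).trans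
    (Finset.sum_congr rfl fun u _ => Finset.sum_comm))
  refine Finset.sum_congr rfl fun v _ => Finset.sum_congr rfl fun b _ =>
    Finset.sum_congr rfl fun u _ => ?_
  exact Finset.sum_mul _ _ _

/-- the conditional term as a quadruple sum. -/
lemma T_quad {U V X B : Type} [Fintype U] [Fintype V] [Fintype X] [Fintype B]
    (puv : U → V → ℝ) (G : V → X → B → ℝ) :
    ∑ v, (∑ u, puv u v) * miJ (fun x b => G v x b)
      = ∑ u, ∑ v, ∑ x, ∑ b, puv u v *
          (G v x b * Real.logb 2 (G v x b / ((∑ b', G v x b') * (∑ x', G v x' b)))) := by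
  refine Eq.trans (Finset.sum_congr rfl fun v _ => Finset.sum_mul _ _ _)
    (Finset.sum_comm.trans (Finset.sum_congr rfl fun u _ => Finset.sum_congr rfl fun v _ => ?_))
  rw [miJ, Finset.mul_sum]
  exact Finset.sum_congr rfl fun x _ => Finset.mul_sum _ _ _

lemma key {U V X B : Type} [Fintype U] [Fintype V] [Fintype X] [Fintype B]
    (K : X → B → ℝ) (hK : ∀ x b, 0 ≤ K x b) (hK1 : ∀ x, ∑ b, K x b = 1)
    (puv : U → V → ℝ) (hpuv : ∀ u v, 0 ≤ puv u v)
    (pxv : V → X → ℝ) (hpxv : ∀ v x, 0 ≤ pxv v x) (hpxv1 : ∀ v, ∑ x, pxv v x = 1) :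
    miJ (fun x b => ∑ u, ∑ v, puv u v * pxv v x * K x b)
      = cmiJ (fun v b u => ∑ x, puv u v * pxv v x * K x b)
        + miJ (fun u b => ∑ v, ∑ x, puv u v * pxv v x * K x b)
        + ∑ v, (∑ u, puv u v) * miJ (fun x b => pxv v x * K x b) := by
  rw [miJ_quadXB (fun u v x b => puv u v * pxv v x * K x b),
      cmiJ_quad (fun u v x b => puv u v * pxv v x * K x b),
      miJ_quadUB (fun u v x b => puv u v * pxv v x * K x b),
      T_quad puv (fun v x b => pxv v x * K x b)]
  simp only [← Finset.sum_add_distrib]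
  refine Finset.sum_congr rfl fun u _ => Finset.sum_congr rfl fun v _ =>
    Finset.sum_congr rfl fun x _ => Finset.sum_congr rfl fun b _ => ?_
  rcases (hpuv u v).eq_or_lt with h | hp
  · simp [← h]
  rcases (hpxv v x).eq_or_lt with h | hx
  · simp [← h]
  rcases (hK x b).eq_or_lt with h | hk
  · simp [← h]
  have hPnn : ∀ (u' : U) (v' : V) (x' : X) (b' : B), 0 ≤ puv u' v' * pxv v' x' * K x' b' :=
    fun u' v' x' b' => mul_nonneg (mul_nonneg (hpuv _ _) (hpxv _ _)) (hK _ _)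
  -- marginal identities
  have m7 : (∑ u', ∑ v', puv u' v' * pxv v' x * K x b)
      = (∑ u', ∑ v', puv u' v' * pxv v' x) * K x b := by
    rw [Finset.sum_mul]
    exact Finset.sum_congr rfl fun u' _ => (Finset.sum_mul _ _ _).symm
  have m8 : (∑ b', ∑ u', ∑ v', puv u' v' * pxv v' x * K x b')
      = ∑ u', ∑ v', puv u' v' * pxv v' x := by
    rw [sum3_cyc (fun b' u' v' => puv u' v' * pxv v' x * K x b')]
    exact Finset.sum_congr rfl fun u' _ => Finset.sum_congr rfl fun v' _ => by
      rw [← Finset.mul_sum, hK1, mul_one]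
  have m2 : (∑ x', puv u v * pxv v x' * K x' b)
      = puv u v * (∑ x', pxv v x' * K x' b) := by
    rw [Finset.mul_sum]
    exact Finset.sum_congr rfl fun x' _ => mul_assoc _ _ _
  have m3 : (∑ b', ∑ x', puv u v * pxv v x' * K x' b') = puv u v := by
    rw [Finset.sum_comm]
    calc ∑ x', ∑ b', puv u v * pxv v x' * K x' b'
        = ∑ x', puv u v * pxv v x' :=
          Finset.sum_congr rfl fun x' _ => by rw [← Finset.mul_sum, hK1, mul_one]
      _ = ∑ x', puv u v * pxv v x' := rfl
      _ = puv u v := by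
          rw [show (∑ x', puv u v * pxv v x') = puv u v * ∑ x', pxv v x' from
            (Finset.mul_sum _ _ _).symm, hpxv1, mul_one]
  have m5a : (∑ b', ∑ v', ∑ x', puv u v' * pxv v' x' * K x' b') = ∑ v', puv u v' := by
    rw [sum3_cyc (fun b' v' x' => puv u v' * pxv v' x' * K x' b')]
    refine Finset.sum_congr rfl fun v' _ => ?_
    calc ∑ x', ∑ b', puv u v' * pxv v' x' * K x' b'
        = ∑ x', puv u v' * pxv v' x' :=
          Finset.sum_congr rfl fun x' _ => by rw [← Finset.mul_sum, hK1, mul_one]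
      _ = puv u v' := by
          rw [show (∑ x', puv u v' * pxv v' x') = puv u v' * ∑ x', pxv v' x' from
            (Finset.mul_sum _ _ _).symm, hpxv1, mul_one]
  have m5b : (∑ v', ∑ b', ∑ x', puv u v' * pxv v' x' * K x' b') = ∑ v', puv u v' := by
    refine Finset.sum_congr rfl fun v' _ => ?_
    rw [Finset.sum_comm]
    calc ∑ x', ∑ b', puv u v' * pxv v' x' * K x' b'
        = ∑ x', puv u v' * pxv v' x' :=
          Finset.sum_congr rfl fun x' _ => by rw [← Finset.mul_sum, hK1, mul_one]
      _ = puv u v' := by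
          rw [show (∑ x', puv u v' * pxv v' x') = puv u v' * ∑ x', pxv v' x' from
            (Finset.mul_sum _ _ _).symm, hpxv1, mul_one]
  have m6 : (∑ u', ∑ v', ∑ x', puv u' v' * pxv v' x' * K x' b)
      = ∑ x', ∑ u', ∑ v', puv u' v' * pxv v' x' * K x' b :=
    sum3_cyc' _
  have m1 : (∑ b', pxv v x * K x b') = pxv v x := by
    rw [← Finset.mul_sum, hK1, mul_one]
  -- positivity
  have hs3 : 0 < ∑ u', ∑ v', puv u' v' * pxv v' x :=
    lt_of_lt_of_le (mul_pos hp hx)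
      (le_sum2 _ (fun a b' => mul_nonneg (hpuv a b') (hpxv b' x)) u v)
  have hr : 0 < ∑ x', pxv v x' * K x' b :=
    lt_of_lt_of_le (mul_pos hx hk)
      (Finset.single_le_sum (fun x' _ => mul_nonneg (hpxv v x') (hK x' b)) (Finset.mem_univ x))
  have hpU : 0 < ∑ v', puv u v' :=
    lt_of_lt_of_le hp (Finset.single_le_sum (fun v' _ => hpuv u v') (Finset.mem_univ v))
  have hpUB : 0 < ∑ v', ∑ x', puv u v' * pxv v' x' * K x' b :=
    lt_of_lt_of_le (mul_pos (mul_pos hp hx) hk)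
      (le_sum2 _ (fun v' x' => hPnn u v' x' b) v x)
  have hnum : 0 < ∑ u', ∑ v', puv u' v' * pxv v' x * K x b := by
    rw [m7]; exact mul_pos hs3 hk
  have hpB : 0 < ∑ x', ∑ u', ∑ v', puv u' v' * pxv v' x' * K x' b :=
    lt_of_lt_of_le hnum (Finset.single_le_sum
      (fun x' _ => Finset.sum_nonneg fun u' _ => Finset.sum_nonneg fun v' _ => hPnn u' v' x' b)
      (Finset.mem_univ x))
  rw [m7, m8, m2, m3, m5a, m5b, m6, m1]
  have q1 : (∑ u', ∑ v', puv u' v' * pxv v' x) * K x b /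
        ((∑ u', ∑ v', puv u' v' * pxv v' x) *
          (∑ x', ∑ u', ∑ v', puv u' v' * pxv v' x' * K x' b))
      = K x b / (∑ x', ∑ u', ∑ v', puv u' v' * pxv v' x' * K x' b) :=
    mul_div_mul_left _ _ hs3.ne'
  have q3 : puv u v * (∑ x', pxv v x' * K x' b) * (∑ v', puv u v') /
        (puv u v * (∑ v', ∑ x', puv u v' * pxv v' x' * K x' b))
      = (∑ x', pxv v x' * K x' b) * (∑ v', puv u v') /
        (∑ v', ∑ x', puv u v' * pxv v' x' * K x' b) := by
    rw [mul_assoc, mul_div_mul_left _ _ hp.ne']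
  have q4 : pxv v x * K x b / (pxv v x * (∑ x', pxv v x' * K x' b))
      = K x b / (∑ x', pxv v x' * K x' b) :=
    mul_div_mul_left _ _ hx.ne'
  rw [q1, q3, q4]
  rw [Real.logb_div hk.ne' hpB.ne',
      Real.logb_div (mul_pos hr hpU).ne' hpUB.ne', Real.logb_mul hr.ne' hpU.ne',
      Real.logb_div hpUB.ne' (mul_pos hpU hpB).ne', Real.logb_mul hpU.ne' hpB.ne',
      Real.logb_div hk.ne' hr.ne']
  ring

/-- If `Y` is less noisy than `Z` for the channel `W = P_{Y,Z|X}`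
(i.e. `I(W;Y) ≥ I(W;Z)` for every aux variable with `W−X−(Y,Z)` Markov), then for any
joint PMF `P = P_{U,V} P_{X|V} P_{Y,Z|X}` we have
`I(V;Y|U) − I(V;Z|U) ≤ I(X;Y) − I(X;Z)`. -/
theorem stmt0 {U V X Y Z : Type} [Fintype U] [Fintype V] [Fintype X] [Fintype Y] [Fintype Z]
    (W : X → Y → Z → ℝ) (hW : ∀ x y z, 0 ≤ W x y z) (hW1 : ∀ x, ∑ y, ∑ z, W x y z = 1)
    (puv : U → V → ℝ) (hpuv : ∀ u v, 0 ≤ puv u v) (hpuv1 : ∑ u, ∑ v, puv u v = 1)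
    (pxv : V → X → ℝ) (hpxv : ∀ v x, 0 ≤ pxv v x) (hpxv1 : ∀ v, ∑ x, pxv v x = 1)
    (hLN : ∀ (Ω : Type) [Fintype Ω] (q : Ω → X → ℝ),
      (∀ ω x, 0 ≤ q ω x) → (∑ ω, ∑ x, q ω x) = 1 →
      miJ (fun ω z => ∑ x, ∑ y, q ω x * W x y z) ≤
        miJ (fun ω y => ∑ x, ∑ z, q ω x * W x y z)) :
    cmiJ (fun v y u => ∑ x, ∑ z, puv u v * pxv v x * W x y z)
      - cmiJ (fun v z u => ∑ x, ∑ y, puv u v * pxv v x * W x y z)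
      ≤ miJ (fun x y => ∑ u, ∑ v, ∑ z, puv u v * pxv v x * W x y z)
        - miJ (fun x z => ∑ u, ∑ v, ∑ y, puv u v * pxv v x * W x y z) := by
  classical
  have hKy : ∀ x y, 0 ≤ ∑ z, W x y z := fun x y => Finset.sum_nonneg fun z _ => hW x y z
  have hKz : ∀ x z, 0 ≤ ∑ y, W x y z := fun x z => Finset.sum_nonneg fun y _ => hW x y z
  have hKy1 : ∀ x, ∑ y, (∑ z, W x y z) = 1 := hW1
  have hKz1 : ∀ x, ∑ z, (∑ y, W x y z) = 1 := fun x => Finset.sum_comm.trans (hW1 x)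
  -- rewrite the goal's four functions into the `key` shapes
  have g1 : (fun v y u => ∑ x, ∑ z, puv u v * pxv v x * W x y z)
      = (fun v y u => ∑ x, puv u v * pxv v x * (∑ z, W x y z)) := by
    funext v y u
    exact Finset.sum_congr rfl fun x _ => (Finset.mul_sum _ _ _).symm
  have g2 : (fun v z u => ∑ x, ∑ y, puv u v * pxv v x * W x y z)
      = (fun v z u => ∑ x, puv u v * pxv v x * (∑ y, W x y z)) := by
    funext v z u
    exact Finset.sum_congr rfl fun x _ => (Finset.mul_sum _ _ _).symm
  have g3 : (fun x y => ∑ u, ∑ v, ∑ z, puv u v * pxv v x * W x y z)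
      = (fun x y => ∑ u, ∑ v, puv u v * pxv v x * (∑ z, W x y z)) := by
    funext x y
    exact Finset.sum_congr rfl fun u _ => Finset.sum_congr rfl fun v _ =>
      (Finset.mul_sum _ _ _).symm
  have g4 : (fun x z => ∑ u, ∑ v, ∑ y, puv u v * pxv v x * W x y z)
      = (fun x z => ∑ u, ∑ v, puv u v * pxv v x * (∑ y, W x y z)) := by
    funext x z
    exact Finset.sum_congr rfl fun u _ => Finset.sum_congr rfl fun v _ =>
      (Finset.mul_sum _ _ _).symm
  have hYkey := key (fun x y => ∑ z, W x y z) hKy hKy1 puv hpuv pxv hpxv hpxv1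
  have hZkey := key (fun x z => ∑ y, W x y z) hKz hKz1 puv hpuv pxv hpxv hpxv1
  -- less-noisy applied with Ω = U
  have hU : miJ (fun u z => ∑ v, ∑ x, puv u v * pxv v x * (∑ y, W x y z))
      ≤ miJ (fun u y => ∑ v, ∑ x, puv u v * pxv v x * (∑ z, W x y z)) := by
    have hnn : ∀ u x, 0 ≤ ∑ v, puv u v * pxv v x :=
      fun u x => Finset.sum_nonneg fun v _ => mul_nonneg (hpuv u v) (hpxv v x)
    have hs1 : (∑ u, ∑ x, ∑ v, puv u v * pxv v x) = 1 := by
      calc ∑ u, ∑ x, ∑ v, puv u v * pxv v x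
          = ∑ u, ∑ v, ∑ x, puv u v * pxv v x :=
            Finset.sum_congr rfl fun u _ => Finset.sum_comm
        _ = ∑ u, ∑ v, puv u v := Finset.sum_congr rfl fun u _ =>
            Finset.sum_congr rfl fun v _ => by rw [← Finset.mul_sum, hpxv1, mul_one]
        _ = 1 := hpuv1
    have h := hLN U (fun u x => ∑ v, puv u v * pxv v x) hnn hs1
    have eY : (fun u y => ∑ x, ∑ z, (∑ v, puv u v * pxv v x) * W x y z)
        = (fun u y => ∑ v, ∑ x, puv u v * pxv v x * (∑ z, W x y z)) := by
      funext u y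
      calc ∑ x, ∑ z, (∑ v, puv u v * pxv v x) * W x y z
          = ∑ x, (∑ v, puv u v * pxv v x) * (∑ z, W x y z) :=
            Finset.sum_congr rfl fun x _ => (Finset.mul_sum _ _ _).symm
        _ = ∑ x, ∑ v, puv u v * pxv v x * (∑ z, W x y z) :=
            Finset.sum_congr rfl fun x _ => Finset.sum_mul _ _ _
        _ = ∑ v, ∑ x, puv u v * pxv v x * (∑ z, W x y z) := Finset.sum_comm
    have eZ : (fun u z => ∑ x, ∑ y, (∑ v, puv u v * pxv v x) * W x y z)
        = (fun u z => ∑ v, ∑ x, puv u v * pxv v x * (∑ y, W x y z)) := by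
      funext u z
      calc ∑ x, ∑ y, (∑ v, puv u v * pxv v x) * W x y z
          = ∑ x, (∑ v, puv u v * pxv v x) * (∑ y, W x y z) :=
            Finset.sum_congr rfl fun x _ => (Finset.mul_sum _ _ _).symm
        _ = ∑ x, ∑ v, puv u v * pxv v x * (∑ y, W x y z) :=
            Finset.sum_congr rfl fun x _ => Finset.sum_mul _ _ _
        _ = ∑ v, ∑ x, puv u v * pxv v x * (∑ y, W x y z) := Finset.sum_comm
    rwa [eY, eZ] at h
  -- less-noisy applied with Ω = X (per v), then averaged
  have hTv : ∀ v : V, miJ (fun x z => pxv v x * (∑ y, W x y z))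
      ≤ miJ (fun x y => pxv v x * (∑ z, W x y z)) := by
    intro v
    have hnn : ∀ x1 x2 : X, 0 ≤ (if x2 = x1 then pxv v x1 else 0) := by
      intro x1 x2
      split
      · exact hpxv v x1
      · exact le_rfl
    have hs1 : (∑ x1, ∑ x2, if x2 = x1 then pxv v x1 else 0) = 1 := by
      simp only [Finset.sum_ite_eq', Finset.mem_univ, if_true]
      exact hpxv1 v
    have h := hLN X (fun x1 x2 => if x2 = x1 then pxv v x1 else 0) hnn hs1
    have eY : (fun x1 y => ∑ x, ∑ z, (if x = x1 then pxv v x1 else 0) * W x y z)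
        = (fun x1 y => pxv v x1 * (∑ z, W x1 y z)) := by
      funext x1 y
      calc ∑ x, ∑ z, (if x = x1 then pxv v x1 else 0) * W x y z
          = ∑ x, (if x = x1 then pxv v x1 else 0) * (∑ z, W x y z) :=
            Finset.sum_congr rfl fun x _ => (Finset.mul_sum _ _ _).symm
        _ = ∑ x, (if x = x1 then pxv v x1 * (∑ z, W x y z) else 0) :=
            Finset.sum_congr rfl fun x _ => by split <;> simp
        _ = pxv v x1 * (∑ z, W x1 y z) := by
            simp only [Finset.sum_ite_eq', Finset.mem_univ, if_true]
    have eZ : (fun x1 z => ∑ x, ∑ y, (if x = x1 then pxv v x1 else 0) * W x y z)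
        = (fun x1 z => pxv v x1 * (∑ y, W x1 y z)) := by
      funext x1 z
      calc ∑ x, ∑ y, (if x = x1 then pxv v x1 else 0) * W x y z
          = ∑ x, (if x = x1 then pxv v x1 else 0) * (∑ y, W x y z) :=
            Finset.sum_congr rfl fun x _ => (Finset.mul_sum _ _ _).symm
        _ = ∑ x, (if x = x1 then pxv v x1 * (∑ y, W x y z) else 0) :=
            Finset.sum_congr rfl fun x _ => by split <;> simp
        _ = pxv v x1 * (∑ y, W x1 y z) := by
            simp only [Finset.sum_ite_eq', Finset.mem_univ, if_true]
    rwa [eY, eZ] at h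
  have hT : (∑ v, (∑ u, puv u v) * miJ (fun x z => pxv v x * (∑ y, W x y z)))
      ≤ ∑ v, (∑ u, puv u v) * miJ (fun x y => pxv v x * (∑ z, W x y z)) :=
    Finset.sum_le_sum fun v _ =>
      mul_le_mul_of_nonneg_left (hTv v) (Finset.sum_nonneg fun u _ => hpuv u v)
  rw [g1, g2, g3, g4, hYkey, hZkey]
  linarith [hU, hT]
end

section
/- If Z is less noisy than Y (i.e., I(W;Z) ≥ I(W;Y) for all W with W−X−(Y,Z) a Markov chain), then for every PMF P = P_{U,V} P_{X|V} P_{Y,Z|X}, I(V;Y|U) − I(V;Z|U) ≤ 0; hence the secrecy-capacity expression max_{P_{U,V,X}} [I(V;Y|U) − I(V;Z|U)] subject to any cost constraint E[C(X)] ≤ b equals 0. -/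
open scoped BigOperators

lemma arg_eq (x A B s : ℝ) (hs : s ≠ 0) :
    (x/s)/((A/s)*(B/s)) = x*s/(A*B) := by
  rcases eq_or_ne (A*B) 0 with h | h
  · rcases mul_eq_zero.1 h with hA | hA <;> simp [hA, h]
  · have hA : A ≠ 0 := left_ne_zero_of_mul h
    have hB : B ≠ 0 := right_ne_zero_of_mul h
    field_simp

lemma aux {V B U : Type} [Fintype V] [Fintype B] [Fintype U]
    (p : U → V → B → ℝ) (S : U → ℝ) (hp : ∀ u v b, 0 ≤ p u v b)
    (hS : ∀ u, (∑ v, ∑ b, p u v b) = S u) :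
    cmiJ (fun v b u => p u v b) = ∑ u, S u * miJ (fun v b => p u v b / S u) := by
  unfold cmiJ miJ
  simp only
  calc (∑ v, ∑ b, ∑ u, p u v b *
        Real.logb 2 ((p u v b * ∑ v', ∑ b', p u v' b') /
          ((∑ b', p u v b') * (∑ v', p u v' b))))
      = ∑ v, ∑ u, ∑ b, p u v b *
        Real.logb 2 ((p u v b * ∑ v', ∑ b', p u v' b') /
          ((∑ b', p u v b') * (∑ v', p u v' b))) :=
        Finset.sum_congr rfl fun v _ => Finset.sum_comm
    _ = ∑ u, ∑ v, ∑ b, p u v b *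
        Real.logb 2 ((p u v b * ∑ v', ∑ b', p u v' b') /
          ((∑ b', p u v b') * (∑ v', p u v' b))) := Finset.sum_comm
    _ = ∑ u, S u * ∑ v, ∑ b, p u v b / S u *
        Real.logb 2 (p u v b / S u /
          ((∑ b', p u v b' / S u) * (∑ v', p u v' b / S u))) := by
        refine Finset.sum_congr rfl fun u _ => ?_
        rcases eq_or_ne (S u) 0 with h0 | h0
        · have hz : ∀ v ∈ Finset.univ, ∀ b ∈ Finset.univ, p u v b = 0 := by
            have h1 := (hS u).trans h0
            intro v _ b _
            have h2 : ∀ v ∈ (Finset.univ : Finset V), (∑ b, p u v b) = 0 :=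
              (Finset.sum_eq_zero_iff_of_nonneg (fun v _ =>
                Finset.sum_nonneg fun b _ => hp u v b)).1 h1
            exact (Finset.sum_eq_zero_iff_of_nonneg (fun b _ => hp u v b)).1
              (h2 v (Finset.mem_univ v)) b (Finset.mem_univ b)
          rw [h0]
          rw [Finset.sum_eq_zero, zero_mul]
          · intro v hv
            rw [Finset.sum_eq_zero]
            intro b hb
            rw [hz v hv b hb, zero_mul]
        · rw [Finset.mul_sum]
          refine Finset.sum_congr rfl fun v _ => ?_
          rw [Finset.mul_sum]
          refine Finset.sum_congr rfl fun b _ => ?_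
          rw [← Finset.sum_div, ← Finset.sum_div, arg_eq _ _ _ _ h0, hS u,
            ← mul_assoc, mul_div_cancel₀ _ h0]

lemma zero_cmi {V B U : Type} [Fintype V] [Fintype B] [Fintype U]
    (a : U → V → ℝ) (r : B → ℝ) (ha : ∀ u v, 0 ≤ a u v) (hr : ∀ b, 0 ≤ r b) :
    cmiJ (fun v b u => a u v * r b) = 0 := by
  unfold cmiJ
  refine Finset.sum_eq_zero fun v _ => Finset.sum_eq_zero fun b _ =>
    Finset.sum_eq_zero fun u _ => ?_
  simp only
  rcases eq_or_ne (a u v * r b) 0 with h0 | h0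
  · rw [h0, zero_mul]
  · have hav : 0 < a u v := lt_of_le_of_ne (ha u v) (Ne.symm (left_ne_zero_of_mul h0))
    have hrb : 0 < r b := lt_of_le_of_ne (hr b) (Ne.symm (right_ne_zero_of_mul h0))
    have hs : 0 < ∑ v', a u v' :=
      lt_of_lt_of_le hav (Finset.single_le_sum (fun v' _ => ha u v') (Finset.mem_univ v))
    have hR : 0 < ∑ b', r b' :=
      lt_of_lt_of_le hrb (Finset.single_le_sum (fun b' _ => hr b') (Finset.mem_univ b))
    have e1 : (∑ b', a u v * r b') = a u v * ∑ b', r b' := by rw [Finset.mul_sum]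
    have e2 : (∑ v', a u v' * r b) = (∑ v', a u v') * r b := by rw [Finset.sum_mul]
    have e3 : (∑ v', ∑ b', a u v' * r b') = (∑ v', a u v') * ∑ b', r b' := by
      rw [Finset.sum_mul]
      exact Finset.sum_congr rfl fun v' _ => by rw [Finset.mul_sum]
    rw [e1, e2, e3]
    have : (a u v * r b * ((∑ v', a u v') * ∑ b', r b')) /
        ((a u v * ∑ b', r b') * ((∑ v', a u v') * r b)) = 1 := by
      rw [div_eq_one_iff_eq (by positivity)]
      ring
    rw [this, Real.logb_one, mul_zero]

/-- If `Z` is less noisy than `Y`, then every Markov chain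
`U−V−X−(Y,Z)` satisfies `I(V;Y|U) − I(V;Z|U) ≤ 0`; hence the cost-constrained
secrecy-capacity expression `max [I(V;Y|U) − I(V;Z|U)]` over `E[C(X)] ≤ b` equals `0`. -/
theorem stmt1 {U V X Y Z : Type} [Fintype U] [Fintype V] [Fintype X] [Fintype Y] [Fintype Z]
    [Nonempty U] [Nonempty V] [Nonempty X]
    (W : X → Y → Z → ℝ) (hW : ∀ x y z, 0 ≤ W x y z) (hW1 : ∀ x, ∑ y, ∑ z, W x y z = 1)
    (C : X → ℝ) (hC : ∀ x, 0 ≤ C x) (b : ℝ) (hb : (⨅ x, C x) ≤ b)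
    (hLN : ∀ (Ω : Type) [Fintype Ω] (q : Ω → X → ℝ),
      (∀ ω x, 0 ≤ q ω x) → (∑ ω, ∑ x, q ω x) = 1 →
      miJ (fun ω y => ∑ x, ∑ z, q ω x * W x y z) ≤
        miJ (fun ω z => ∑ x, ∑ y, q ω x * W x y z)) :
    (∀ (puv : U → V → ℝ) (pxv : V → X → ℝ),
      (∀ u v, 0 ≤ puv u v) → (∑ u, ∑ v, puv u v) = 1 →
      (∀ v x, 0 ≤ pxv v x) → (∀ v, ∑ x, pxv v x = 1) →
      cmiJ (fun v y u => ∑ x, ∑ z, puv u v * pxv v x * W x y z)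
        - cmiJ (fun v z u => ∑ x, ∑ y, puv u v * pxv v x * W x y z) ≤ 0) ∧
    sSup {r : ℝ | ∃ (puv : U → V → ℝ) (pxv : V → X → ℝ),
      (∀ u v, 0 ≤ puv u v) ∧ (∑ u, ∑ v, puv u v) = 1 ∧
      (∀ v x, 0 ≤ pxv v x) ∧ (∀ v, ∑ x, pxv v x = 1) ∧
      (∑ x, (∑ v, (∑ u, puv u v) * pxv v x) * C x) ≤ b ∧
      r = cmiJ (fun v y u => ∑ x, ∑ z, puv u v * pxv v x * W x y z)
        - cmiJ (fun v z u => ∑ x, ∑ y, puv u v * pxv v x * W x y z)} = 0 := by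
  classical
  have hW1' : ∀ x, ∑ z, ∑ y, W x y z = 1 := fun x => Finset.sum_comm.trans (hW1 x)
  have part1 : ∀ (puv : U → V → ℝ) (pxv : V → X → ℝ),
      (∀ u v, 0 ≤ puv u v) → (∑ u, ∑ v, puv u v) = 1 →
      (∀ v x, 0 ≤ pxv v x) → (∀ v, ∑ x, pxv v x = 1) →
      cmiJ (fun v y u => ∑ x, ∑ z, puv u v * pxv v x * W x y z)
        - cmiJ (fun v z u => ∑ x, ∑ y, puv u v * pxv v x * W x y z) ≤ 0 := by
    intro puv pxv h1 h2 h3 h4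
    have key : ∀ {B : Type} [Fintype B], ∀ (K : X → B → ℝ), (∀ x b', 0 ≤ K x b') →
        (∀ x, ∑ b', K x b' = 1) →
        ∀ u, (∑ v, ∑ b', ∑ x, puv u v * pxv v x * K x b') = ∑ v, puv u v := by
      intro B _ K hK hK1 u
      refine Finset.sum_congr rfl fun v _ => ?_
      rw [Finset.sum_comm]
      calc (∑ x, ∑ b', puv u v * pxv v x * K x b')
          = ∑ x, puv u v * pxv v x * ∑ b', K x b' :=
            Finset.sum_congr rfl fun x _ => by rw [← Finset.mul_sum]
        _ = ∑ x, puv u v * pxv v x := by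
            refine Finset.sum_congr rfl fun x _ => by rw [hK1 x, mul_one]
        _ = puv u v * ∑ x, pxv v x := by rw [← Finset.mul_sum]
        _ = puv u v := by rw [h4 v, mul_one]
    -- inner-sum reordering helpers (the statement has ∑ x, ∑ z while key wants ∑ x with K)
    have eY : cmiJ (fun v y u => ∑ x, ∑ z, puv u v * pxv v x * W x y z)
        = ∑ u, (∑ v, puv u v) * miJ (fun v y =>
            (∑ x, ∑ z, puv u v * pxv v x * W x y z) / (∑ v', puv u v')) := by
      refine aux (fun u v y => ∑ x, ∑ z, puv u v * pxv v x * W x y z) (fun u => ∑ v, puv u v)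
        (fun u v y => Finset.sum_nonneg fun x _ => Finset.sum_nonneg fun z _ =>
          mul_nonneg (mul_nonneg (h1 u v) (h3 v x)) (hW x y z)) ?_
      intro u
      have := key (fun x y => ∑ z, W x y z)
        (fun x y => Finset.sum_nonneg fun z _ => hW x y z) hW1 u
      simpa [Finset.mul_sum] using this
    have eZ : cmiJ (fun v z u => ∑ x, ∑ y, puv u v * pxv v x * W x y z)
        = ∑ u, (∑ v, puv u v) * miJ (fun v z =>
            (∑ x, ∑ y, puv u v * pxv v x * W x y z) / (∑ v', puv u v')) := by
      refine aux (fun u v z => ∑ x, ∑ y, puv u v * pxv v x * W x y z) (fun u => ∑ v, puv u v)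
        (fun u v z => Finset.sum_nonneg fun x _ => Finset.sum_nonneg fun y _ =>
          mul_nonneg (mul_nonneg (h1 u v) (h3 v x)) (hW x y z)) ?_
      intro u
      have := key (fun x z => ∑ y, W x y z)
        (fun x z => Finset.sum_nonneg fun y _ => hW x y z) hW1' u
      simpa [Finset.mul_sum] using this
    rw [sub_nonpos, eY, eZ]
    refine Finset.sum_le_sum fun u _ => ?_
    rcases eq_or_ne (∑ v, puv u v) 0 with h0 | h0
    · rw [h0, zero_mul, zero_mul]
    · have hsn : 0 ≤ ∑ v, puv u v := Finset.sum_nonneg fun v _ => h1 u v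
      set s : ℝ := ∑ v', puv u v' with hs_def
      have hq0 : ∀ (v : V) (x : X), 0 ≤ puv u v * pxv v x / s :=
        fun v x => div_nonneg (mul_nonneg (h1 u v) (h3 v x)) hsn
      have hq1 : (∑ v, ∑ x, puv u v * pxv v x / s) = 1 := by
        calc (∑ v, ∑ x, puv u v * pxv v x / s)
            = ∑ v, (puv u v * ∑ x, pxv v x) / s :=
              Finset.sum_congr rfl fun v _ => by rw [← Finset.sum_div, ← Finset.mul_sum]
          _ = ∑ v, puv u v / s := by
              refine Finset.sum_congr rfl fun v _ => by rw [h4 v, mul_one]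
          _ = 1 := by rw [← Finset.sum_div, div_self h0]
      have hln := hLN V (fun v x => puv u v * pxv v x / s) hq0 hq1
      have cY : (fun v y => ∑ x, ∑ z, (puv u v * pxv v x / s) * W x y z)
          = (fun v y => (∑ x, ∑ z, puv u v * pxv v x * W x y z) / s) := by
        funext v y
        rw [Finset.sum_div]
        refine Finset.sum_congr rfl fun x _ => ?_
        rw [Finset.sum_div]
        exact Finset.sum_congr rfl fun z _ => by rw [div_mul_eq_mul_div]
      have cZ : (fun v z => ∑ x, ∑ y, (puv u v * pxv v x / s) * W x y z)
          = (fun v z => (∑ x, ∑ y, puv u v * pxv v x * W x y z) / s) := by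
        funext v z
        rw [Finset.sum_div]
        refine Finset.sum_congr rfl fun x _ => ?_
        rw [Finset.sum_div]
        exact Finset.sum_congr rfl fun y _ => by rw [div_mul_eq_mul_div]
      rw [cY, cZ] at hln
      exact mul_le_mul_of_nonneg_left hln hsn
  refine ⟨part1, ?_⟩
  -- witness achieving 0
  obtain ⟨x0, hx0⟩ := Finite.exists_min C
  have hx0b : C x0 ≤ b := le_trans (le_ciInf hx0) hb
  set p0 : U → V → ℝ := fun _ _ => ((Fintype.card U : ℝ) * (Fintype.card V : ℝ))⁻¹ with hp0
  set q0 : V → X → ℝ := fun _ x => if x = x0 then 1 else 0 with hq0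
  have hcU : (0:ℝ) < Fintype.card U := by positivity
  have hcV : (0:ℝ) < Fintype.card V := by
    have := Fintype.card_pos (α := V); positivity
  have hp0nn : ∀ u v, 0 ≤ p0 u v := fun u v => by positivity
  have hp0sum : (∑ u : U, ∑ v : V, p0 u v) = 1 := by
    simp only [hp0, Finset.sum_const, Finset.card_univ, nsmul_eq_mul]
    rw [mul_inv]
    field_simp
  have hq0nn : ∀ v x, 0 ≤ q0 v x := fun v x => by
    simp only [hq0]; split <;> norm_num
  have hq0sum : ∀ v, ∑ x, q0 v x = 1 := fun v => by
    simp [hq0]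
  have redY : (fun v y (u : U) => ∑ x, ∑ z, p0 u v * q0 v x * W x y z)
      = (fun v y u => p0 u v * ∑ z, W x0 y z) := by
    funext v y u
    simp [hq0, mul_ite, ite_mul, mul_one, mul_zero, zero_mul, Finset.mul_sum]
  have redZ : (fun v z (u : U) => ∑ x, ∑ y, p0 u v * q0 v x * W x y z)
      = (fun v z u => p0 u v * ∑ y, W x0 y z) := by
    funext v z u
    simp [hq0, mul_ite, ite_mul, mul_one, mul_zero, zero_mul, Finset.mul_sum]
  have hzeroY : cmiJ (fun v y (u : U) => ∑ x, ∑ z, p0 u v * q0 v x * W x y z) = 0 := by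
    rw [redY]
    exact zero_cmi p0 (fun y => ∑ z, W x0 y z) hp0nn
      (fun y => Finset.sum_nonneg fun z _ => hW x0 y z)
  have hzeroZ : cmiJ (fun v z (u : U) => ∑ x, ∑ y, p0 u v * q0 v x * W x y z) = 0 := by
    rw [redZ]
    exact zero_cmi p0 (fun z => ∑ y, W x0 y z) hp0nn
      (fun z => Finset.sum_nonneg fun y _ => hW x0 y z)
  have hcost : (∑ x, (∑ v, (∑ u, p0 u v) * q0 v x) * C x) ≤ b := by
    have inner : ∀ x, (∑ v, (∑ u, p0 u v) * q0 v x) = if x = x0 then 1 else 0 := by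
      intro x
      rcases eq_or_ne x x0 with h | h
      · subst h
        simp only [hq0, if_pos rfl, mul_one, hp0, Finset.sum_const, Finset.card_univ,
          nsmul_eq_mul, if_true]
        rw [mul_inv]
        field_simp
      · simp [hq0, h]
    have : (∑ x, (∑ v, (∑ u, p0 u v) * q0 v x) * C x) = C x0 := by
      calc (∑ x, (∑ v, (∑ u, p0 u v) * q0 v x) * C x)
          = ∑ x, (if x = x0 then 1 else 0) * C x :=
            Finset.sum_congr rfl fun x _ => by rw [inner x]
        _ = C x0 := by simp [ite_mul, zero_mul, one_mul]
    rw [this]; exact hx0b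
  have hmem : (0:ℝ) ∈ {r : ℝ | ∃ (puv : U → V → ℝ) (pxv : V → X → ℝ),
      (∀ u v, 0 ≤ puv u v) ∧ (∑ u, ∑ v, puv u v) = 1 ∧
      (∀ v x, 0 ≤ pxv v x) ∧ (∀ v, ∑ x, pxv v x = 1) ∧
      (∑ x, (∑ v, (∑ u, puv u v) * pxv v x) * C x) ≤ b ∧
      r = cmiJ (fun v y u => ∑ x, ∑ z, puv u v * pxv v x * W x y z)
        - cmiJ (fun v z u => ∑ x, ∑ y, puv u v * pxv v x * W x y z)} :=
    ⟨p0, q0, hp0nn, hp0sum, hq0nn, hq0sum, hcost, by rw [hzeroY, hzeroZ, sub_zero]⟩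
  have hub : ∀ r ∈ {r : ℝ | ∃ (puv : U → V → ℝ) (pxv : V → X → ℝ),
      (∀ u v, 0 ≤ puv u v) ∧ (∑ u, ∑ v, puv u v) = 1 ∧
      (∀ v x, 0 ≤ pxv v x) ∧ (∀ v, ∑ x, pxv v x = 1) ∧
      (∑ x, (∑ v, (∑ u, puv u v) * pxv v x) * C x) ≤ b ∧
      r = cmiJ (fun v y u => ∑ x, ∑ z, puv u v * pxv v x * W x y z)
        - cmiJ (fun v z u => ∑ x, ∑ y, puv u v * pxv v x * W x y z)}, r ≤ 0 := by
    rintro r ⟨puv, pxv, a1, a2, a3, a4, _, rfl⟩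
    exact part1 puv pxv a1 a2 a3 a4
  exact le_antisymm (csSup_le ⟨0, hmem⟩ hub) (le_csSup ⟨0, hub⟩ hmem)
end

section
/- The function b ↦ C̄(b) := sup over PMFs P_{U,V,X} with P_{U,V,X} = P_{U,V} P_{X|V} and E_P[C(X)] ≤ b of I(V;Y|U) − I(V;Z|U) (with (Y,Z) generated from X by a fixed channel P_{Y,Z|X}) is concave on [c_min, ∞), where c_min = min_x C(x). -/
open scoped BigOperators

/-- The CC-WTC secrecy-capacity expression `C̄(b)`: the supremum of
`I(V;Y|U) − I(V;Z|U)` over all finite auxiliary alphabets and joint PMFs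
`P_{U,V,X} = P_{U,V} P_{X|V}` with `E[C(X)] ≤ b`, the pair `(Y,Z)` being generated
from `X` by the fixed channel `W`. -/
noncomputable def Cbar {X Y Z : Type} [Fintype X] [Fintype Y] [Fintype Z]
    (W : X → Y → Z → ℝ) (C : X → ℝ) (b : ℝ) : ℝ :=
  sSup {r : ℝ | ∃ (mU mV : ℕ) (puv : Fin mU → Fin mV → ℝ) (pxv : Fin mV → X → ℝ),
    (∀ u v, 0 ≤ puv u v) ∧ (∑ u, ∑ v, puv u v) = 1 ∧
    (∀ v x, 0 ≤ pxv v x) ∧ (∀ v, ∑ x, pxv v x = 1) ∧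
    (∑ x, (∑ v, (∑ u, puv u v) * pxv v x) * C x) ≤ b ∧
    r = cmiJ (fun v y u => ∑ x, ∑ z, puv u v * pxv v x * W x y z)
      - cmiJ (fun v z u => ∑ x, ∑ y, puv u v * pxv v x * W x y z)}

lemma mul_logb_div_le (p q : ℝ) (hp : 0 ≤ p) (hq : 0 ≤ q) (h : p ≠ 0 → q ≠ 0) :
    p * Real.logb 2 (q / p) ≤ (q - p) / Real.log 2 := by
  rcases eq_or_lt_of_le hp with hp0 | hp0
  · simp [← hp0]
    positivity
  · have hq0 : 0 < q := hq.lt_of_ne (Ne.symm (h hp0.ne'))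
    have hlog : Real.log (q / p) ≤ q / p - 1 :=
      Real.log_le_sub_one_of_pos (by positivity)
    have h2 : (0:ℝ) < Real.log 2 := Real.log_pos one_lt_two
    rw [Real.logb, ← mul_div_assoc, div_le_div_iff_of_pos_right h2]
    calc p * Real.log (q / p) ≤ p * (q / p - 1) := by
          exact mul_le_mul_of_nonneg_left hlog hp
      _ = q - p := by field_simp

lemma cmiJ_nonneg {A B C : Type*} [Fintype A] [Fintype B] [Fintype C]
    (p : A → B → C → ℝ) (hp : ∀ a b c, 0 ≤ p a b c) : 0 ≤ cmiJ p := by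
  rw [← neg_nonpos, cmiJ, ← Finset.sum_neg_distrib]
  simp_rw [← Finset.sum_neg_distrib]
  have hterm : ∀ a b c, -(p a b c *
      Real.logb 2 ((p a b c * (∑ a', ∑ b', p a' b' c)) /
      ((∑ b', p a b' c) * (∑ a', p a' b c))))
      ≤ (((∑ b', p a b' c) * (∑ a', p a' b c)) / (∑ a', ∑ b', p a' b' c) - p a b c)
          / Real.log 2 := by
    intro a b c
    have h1 : -(p a b c *
        Real.logb 2 ((p a b c * (∑ a', ∑ b', p a' b' c)) /
        ((∑ b', p a b' c) * (∑ a', p a' b c))))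
        = p a b c * Real.logb 2
          ((((∑ b', p a b' c) * (∑ a', p a' b c)) / (∑ a', ∑ b', p a' b' c)) / p a b c) := by
      rw [neg_mul_eq_mul_neg, ← Real.logb_inv, inv_div]
      congr 1
      rw [div_div, mul_comm (p a b c) (∑ a', ∑ b', p a' b' c)]
    rw [h1]
    apply mul_logb_div_le _ _ (hp a b c)
      (div_nonneg (mul_nonneg (Finset.sum_nonneg fun _ _ => hp _ _ _)
        (Finset.sum_nonneg fun _ _ => hp _ _ _))
        (Finset.sum_nonneg fun _ _ => Finset.sum_nonneg fun _ _ => hp _ _ _))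
    intro hne
    have hpos : 0 < p a b c := (hp a b c).lt_of_ne (Ne.symm hne)
    have hA : 0 < ∑ b', p a b' c :=
      hpos.trans_le (Finset.single_le_sum (fun b' _ => hp a b' c) (Finset.mem_univ b))
    have hB : 0 < ∑ a', p a' b c :=
      hpos.trans_le (Finset.single_le_sum (fun a' _ => hp a' b c) (Finset.mem_univ a))
    have hM : 0 < ∑ a', ∑ b', p a' b' c :=
      hA.trans_le (Finset.single_le_sum
        (fun a' _ => Finset.sum_nonneg fun b' _ => hp a' b' c) (Finset.mem_univ a))
    positivity
  calc (∑ a, ∑ b, ∑ c, -(p a b c *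
      Real.logb 2 ((p a b c * (∑ a', ∑ b', p a' b' c)) /
      ((∑ b', p a b' c) * (∑ a', p a' b c)))))
      ≤ ∑ a, ∑ b, ∑ c, (((∑ b', p a b' c) * (∑ a', p a' b c)) /
          (∑ a', ∑ b', p a' b' c) - p a b c) / Real.log 2 := by
        apply Finset.sum_le_sum; intro a _
        apply Finset.sum_le_sum; intro b _
        apply Finset.sum_le_sum; intro c _
        exact hterm a b c
    _ ≤ 0 := by
        have hz : ∀ c : C, (∑ a, ∑ b, ((∑ b', p a b' c) * (∑ a', p a' b c)) /
            (∑ a', ∑ b', p a' b' c)) = ∑ a, ∑ b, p a b c := by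
          intro c
          have : (∑ a, ∑ b, ((∑ b', p a b' c) * (∑ a', p a' b c)) /
              (∑ a', ∑ b', p a' b' c))
              = ((∑ a, ∑ b', p a b' c) * (∑ b, ∑ a', p a' b c)) /
                (∑ a', ∑ b', p a' b' c) := by
            rw [Finset.sum_mul_sum, Finset.sum_div]
            congr 1; ext a
            rw [Finset.sum_div]
          rw [this, Finset.sum_comm (f := fun b a => p a b c)]
          exact mul_self_div_self _
        have e1 : ∀ (f : A → B → C → ℝ), (∑ a, ∑ b, ∑ c, f a b c) = ∑ c, ∑ a, ∑ b, f a b c := by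
          intro f
          calc ∑ a, ∑ b, ∑ c, f a b c = ∑ a, ∑ c, ∑ b, f a b c :=
                Finset.sum_congr rfl (fun a _ => Finset.sum_comm)
            _ = ∑ c, ∑ a, ∑ b, f a b c := Finset.sum_comm
        have e2 : (∑ a, ∑ b, ∑ c, ((∑ b', p a b' c) * (∑ a', p a' b c)) /
            (∑ a', ∑ b', p a' b' c)) = ∑ a, ∑ b, ∑ c, p a b c := by
          rw [e1, e1 p]
          exact Finset.sum_congr rfl (fun c _ => hz c)
        simp_rw [sub_div, Finset.sum_sub_distrib, ← Finset.sum_div]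
        rw [e2]
        simp

lemma cmiJ_le_logb_card {A B C : Type*} [Fintype A] [Fintype B] [Fintype C]
    (p : A → B → C → ℝ) (hp : ∀ a b c, 0 ≤ p a b c)
    (htot : (∑ a, ∑ b, ∑ c, p a b c) = 1) :
    cmiJ p ≤ Real.logb 2 (Fintype.card B) := by
  rcases isEmpty_or_nonempty B with hB | hB
  · simp [cmiJ]
  have hn : (0:ℝ) < (Fintype.card B : ℝ) := by
    have := Fintype.card_pos (α := B); positivity
  set n : ℝ := (Fintype.card B : ℝ) with hn_def
  -- reorder helper
  have e1 : ∀ (f : A → B → C → ℝ), (∑ a, ∑ b, ∑ c, f a b c) = ∑ b, ∑ c, ∑ a, f a b c := by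
    intro f
    calc ∑ a, ∑ b, ∑ c, f a b c = ∑ b, ∑ a, ∑ c, f a b c := Finset.sum_comm
      _ = ∑ b, ∑ c, ∑ a, f a b c := Finset.sum_congr rfl (fun b _ => Finset.sum_comm)
  -- step 1
  have step1 : cmiJ p ≤ ∑ b, ∑ c, (∑ a', p a' b c) *
      Real.logb 2 ((∑ a', ∑ b', p a' b' c) / (∑ a', p a' b c)) := by
    rw [cmiJ, e1]
    apply Finset.sum_le_sum; intro b _
    apply Finset.sum_le_sum; intro c _
    rw [Finset.sum_mul]
    apply Finset.sum_le_sum; intro a _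
    rcases eq_or_lt_of_le (hp a b c) with h0 | h0
    · simp [← h0]
    · have hA : 0 < ∑ b', p a b' c :=
        h0.trans_le (Finset.single_le_sum (fun b' _ => hp a b' c) (Finset.mem_univ b))
      have hBc : 0 < ∑ a', p a' b c :=
        h0.trans_le (Finset.single_le_sum (fun a' _ => hp a' b c) (Finset.mem_univ a))
      have hM : 0 < ∑ a', ∑ b', p a' b' c :=
        hA.trans_le (Finset.single_le_sum
          (fun a' _ => Finset.sum_nonneg fun b' _ => hp a' b' c) (Finset.mem_univ a))
      apply mul_le_mul_of_nonneg_left _ h0.le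
      apply Real.logb_le_logb_of_le one_lt_two (by positivity)
      have hle : p a b c ≤ ∑ b', p a b' c :=
        Finset.single_le_sum (fun b' _ => hp a b' c) (Finset.mem_univ b)
      rw [div_le_div_iff₀ (by positivity) hBc]
      nlinarith [mul_le_mul_of_nonneg_right hle (le_of_lt (mul_pos hM hBc))]
  have step2 : ∀ (b : B) (c : C), (∑ a', p a' b c) *
      Real.logb 2 ((∑ a', ∑ b', p a' b' c) / (∑ a', p a' b c))
      ≤ ((∑ a', ∑ b', p a' b' c) / n - (∑ a', p a' b c)) / Real.log 2
        + (∑ a', p a' b c) * Real.logb 2 n := by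
    intro b c
    have hBv : 0 ≤ ∑ a', p a' b c := Finset.sum_nonneg fun a' _ => hp a' b c
    have hM0 : 0 ≤ ∑ a', ∑ b', p a' b' c :=
      Finset.sum_nonneg fun a' _ => Finset.sum_nonneg fun b' _ => hp a' b' c
    have hlog2 : (0:ℝ) < Real.log 2 := Real.log_pos one_lt_two
    rcases eq_or_lt_of_le hBv with h0 | h0
    · rw [← h0]
      simp
      positivity
    · have hM : 0 < ∑ a', ∑ b', p a' b' c := by
        refine h0.trans_le (Finset.sum_le_sum fun a' _ =>
          Finset.single_le_sum (fun b' _ => hp a' b' c) (Finset.mem_univ b))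
      have harg : (∑ a', ∑ b', p a' b' c) / (∑ a', p a' b c)
          = (((∑ a', ∑ b', p a' b' c) / n) / (∑ a', p a' b c)) * n := by
        field_simp
      rw [harg, Real.logb_mul (by positivity) (ne_of_gt hn), mul_add]
      have := mul_logb_div_le (∑ a', p a' b c) ((∑ a', ∑ b', p a' b' c) / n)
        hBv (by positivity) (fun _ => by positivity)
      linarith
  have hM1 : (∑ c, ∑ a', ∑ b', p a' b' c) = 1 := by
    calc (∑ c, ∑ a, ∑ b, p a b c) = ∑ a, ∑ c, ∑ b, p a b c := Finset.sum_comm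
      _ = ∑ a, ∑ b, ∑ c, p a b c := Finset.sum_congr rfl (fun a _ => Finset.sum_comm)
      _ = 1 := htot
  have hB1 : (∑ b, ∑ c, ∑ a', p a' b c) = 1 := by rw [← e1 p]; exact htot
  calc cmiJ p ≤ ∑ b, ∑ c, (∑ a', p a' b c) *
        Real.logb 2 ((∑ a', ∑ b', p a' b' c) / (∑ a', p a' b c)) := step1
    _ ≤ ∑ b, ∑ c, (((∑ a', ∑ b', p a' b' c) / n - (∑ a', p a' b c)) / Real.log 2
        + (∑ a', p a' b c) * Real.logb 2 n) := by
        apply Finset.sum_le_sum; intro b _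
        apply Finset.sum_le_sum; intro c _
        exact step2 b c
    _ = Real.logb 2 n := by
        simp_rw [Finset.sum_add_distrib, sub_div, Finset.sum_sub_distrib,
          ← Finset.sum_div, ← Finset.sum_mul]
        rw [hB1]
        have h2 : (∑ b : B, ∑ c, ∑ a', ∑ b', p a' b' c) = n := by
          rw [Finset.sum_congr rfl (fun (b : B) _ => hM1), Finset.sum_const,
            Finset.card_univ, nsmul_eq_mul, mul_one]
        rw [h2, div_self (ne_of_gt hn)]
        ring

lemma cmiJ_smul {A B C : Type*} [Fintype A] [Fintype B] [Fintype C]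
    (k : ℝ) (hk : 0 ≤ k) (p : A → B → C → ℝ) :
    cmiJ (fun a b c => k * p a b c) = k * cmiJ p := by
  rcases eq_or_lt_of_le hk with h0 | h0
  · simp [cmiJ, ← h0]
  · unfold cmiJ
    rw [Finset.mul_sum]
    apply Finset.sum_congr rfl; intro a _
    rw [Finset.mul_sum]
    apply Finset.sum_congr rfl; intro b _
    rw [Finset.mul_sum]
    apply Finset.sum_congr rfl; intro c _
    simp_rw [← Finset.mul_sum]
    have harg : (k * p a b c * (k * ∑ a', ∑ b', p a' b' c)) /
        ((k * ∑ b', p a b' c) * (k * ∑ a', p a' b c))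
        = (p a b c * (∑ a', ∑ b', p a' b' c)) /
          ((∑ b', p a b' c) * (∑ a', p a' b c)) := by
      rw [mul_mul_mul_comm, mul_mul_mul_comm k _ k]
      exact mul_div_mul_left _ _ (by positivity)
    rw [harg]; ring

noncomputable def bd {m0 m1 n0 n1 : ℕ} {B : Type*} (p0 : Fin m0 → B → Fin n0 → ℝ)
    (p1 : Fin m1 → B → Fin n1 → ℝ) : Fin (m0+m1) → B → Fin (n0+n1) → ℝ :=
  fun a b c => Fin.addCases (fun a0 => Fin.addCases (fun c0 => p0 a0 b c0) (fun _ => 0) c)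
    (fun a1 => Fin.addCases (fun _ => 0) (fun c1 => p1 a1 b c1) c) a

lemma cmiJ_bd {m0 m1 n0 n1 : ℕ} {B : Type*} [Fintype B] (p0 : Fin m0 → B → Fin n0 → ℝ)
    (p1 : Fin m1 → B → Fin n1 → ℝ) :
    cmiJ (bd p0 p1) = cmiJ p0 + cmiJ p1 := by
  simp only [cmiJ, bd]
  simp_rw [Fin.sum_univ_add]
  simp [Fin.addCases_left, Fin.addCases_right]

def SetS {X Y Z : Type} [Fintype X] [Fintype Y] [Fintype Z]
    (W : X → Y → Z → ℝ) (C : X → ℝ) (b : ℝ) : Set ℝ :=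
  {r : ℝ | ∃ (mU mV : ℕ) (puv : Fin mU → Fin mV → ℝ) (pxv : Fin mV → X → ℝ),
    (∀ u v, 0 ≤ puv u v) ∧ (∑ u, ∑ v, puv u v) = 1 ∧
    (∀ v x, 0 ≤ pxv v x) ∧ (∀ v, ∑ x, pxv v x = 1) ∧
    (∑ x, (∑ v, (∑ u, puv u v) * pxv v x) * C x) ≤ b ∧
    r = cmiJ (fun v y u => ∑ x, ∑ z, puv u v * pxv v x * W x y z)
      - cmiJ (fun v z u => ∑ x, ∑ y, puv u v * pxv v x * W x y z)}

lemma mem_mix {X Y Z : Type} [Fintype X] [Fintype Y] [Fintype Z]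
    (W : X → Y → Z → ℝ) (C : X → ℝ) {b0 b1 r0 r1 τ : ℝ}
    (hτ0 : 0 ≤ τ) (hτ1 : τ ≤ 1)
    (h0 : r0 ∈ SetS W C b0) (h1 : r1 ∈ SetS W C b1) :
    τ * r0 + (1 - τ) * r1 ∈ SetS W C (τ * b0 + (1 - τ) * b1) := by
  obtain ⟨mU0, mV0, puv0, pxv0, hnn0, hsum0, hxnn0, hxsum0, hcost0, hr0⟩ := h0
  obtain ⟨mU1, mV1, puv1, pxv1, hnn1, hsum1, hxnn1, hxsum1, hcost1, hr1⟩ := h1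
  have hτ1' : 0 ≤ 1 - τ := by linarith
  refine ⟨mU0 + mU1, mV0 + mV1,
    fun u v => Fin.addCases
      (fun u0 => Fin.addCases (fun v0 => τ * puv0 u0 v0) (fun _ => (0:ℝ)) v)
      (fun u1 => Fin.addCases (fun _ => (0:ℝ)) (fun v1 => (1 - τ) * puv1 u1 v1) v) u,
    fun v x => Fin.addCases (fun v0 => pxv0 v0 x) (fun v1 => pxv1 v1 x) v,
    ?_, ?_, ?_, ?_, ?_, ?_⟩
  · -- nonneg
    intro u v
    refine Fin.addCases (fun u0 => ?_) (fun u1 => ?_) u <;>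
      refine Fin.addCases (fun v0 => ?_) (fun v1 => ?_) v <;>
      simp [Fin.addCases_left, Fin.addCases_right]
    · exact mul_nonneg hτ0 (hnn0 _ _)
    · exact mul_nonneg hτ1' (hnn1 _ _)
  · -- sums to one
    simp_rw [Fin.sum_univ_add]
    simp [Fin.addCases_left, Fin.addCases_right, ← Finset.mul_sum]
    rw [hsum0, hsum1]
    ring
  · -- pxv nonneg
    intro v x
    refine Fin.addCases (fun v0 => ?_) (fun v1 => ?_) v <;>
      simp [Fin.addCases_left, Fin.addCases_right]
    exacts [hxnn0 v0 x, hxnn1 v1 x]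
  · -- pxv rows sum to one
    intro v
    refine Fin.addCases (fun v0 => ?_) (fun v1 => ?_) v <;>
      simp [Fin.addCases_left, Fin.addCases_right]
    exacts [hxsum0 v0, hxsum1 v1]
  · -- cost
    have hcost : (∑ x, (∑ v : Fin (mV0 + mV1),
        (∑ u : Fin (mU0 + mU1), Fin.addCases
          (fun u0 => Fin.addCases (fun v0 => τ * puv0 u0 v0) (fun _ => (0:ℝ)) v)
          (fun u1 => Fin.addCases (fun _ => (0:ℝ)) (fun v1 => (1 - τ) * puv1 u1 v1) v) u) *
          Fin.addCases (fun v0 => pxv0 v0 x) (fun v1 => pxv1 v1 x) v) * C x)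
        = τ * (∑ x, (∑ v0, (∑ u0, puv0 u0 v0) * pxv0 v0 x) * C x)
          + (1 - τ) * (∑ x, (∑ v1, (∑ u1, puv1 u1 v1) * pxv1 v1 x) * C x) := by
      simp_rw [Fin.sum_univ_add]
      simp [Fin.addCases_left, Fin.addCases_right, ← Finset.mul_sum]
      simp_rw [add_mul, Finset.sum_add_distrib, mul_assoc]
      simp_rw [← Finset.mul_sum, mul_assoc, ← Finset.mul_sum]
    rw [hcost]
    have h0' := mul_le_mul_of_nonneg_left hcost0 hτ0
    have h1' := mul_le_mul_of_nonneg_left hcost1 hτ1'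
    linarith
  · -- value
    have hjY : (fun v y u => ∑ x, ∑ z, (Fin.addCases
          (fun u0 => Fin.addCases (fun v0 => τ * puv0 u0 v0) (fun _ => (0:ℝ)) v)
          (fun u1 => Fin.addCases (fun _ => (0:ℝ)) (fun v1 => (1 - τ) * puv1 u1 v1) v) u) *
          (Fin.addCases (fun v0 => pxv0 v0 x) (fun v1 => pxv1 v1 x) v) * W x y z)
        = bd (fun v0 y u0 => τ * ∑ x, ∑ z, puv0 u0 v0 * pxv0 v0 x * W x y z)
             (fun v1 y u1 => (1 - τ) * ∑ x, ∑ z, puv1 u1 v1 * pxv1 v1 x * W x y z) := by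
      funext v y u
      refine Fin.addCases (fun v0 => ?_) (fun v1 => ?_) v <;>
        refine Fin.addCases (fun u0 => ?_) (fun u1 => ?_) u <;>
        simp [bd, Fin.addCases_left, Fin.addCases_right, Finset.mul_sum] <;>
        · apply Finset.sum_congr rfl; intro x _
          apply Finset.sum_congr rfl; intro z _
          ring
    have hjZ : (fun v z u => ∑ x, ∑ y, (Fin.addCases
          (fun u0 => Fin.addCases (fun v0 => τ * puv0 u0 v0) (fun _ => (0:ℝ)) v)
          (fun u1 => Fin.addCases (fun _ => (0:ℝ)) (fun v1 => (1 - τ) * puv1 u1 v1) v) u) *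
          (Fin.addCases (fun v0 => pxv0 v0 x) (fun v1 => pxv1 v1 x) v) * W x y z)
        = bd (fun v0 z u0 => τ * ∑ x, ∑ y, puv0 u0 v0 * pxv0 v0 x * W x y z)
             (fun v1 z u1 => (1 - τ) * ∑ x, ∑ y, puv1 u1 v1 * pxv1 v1 x * W x y z) := by
      funext v z u
      refine Fin.addCases (fun v0 => ?_) (fun v1 => ?_) v <;>
        refine Fin.addCases (fun u0 => ?_) (fun u1 => ?_) u <;>
        simp [bd, Fin.addCases_left, Fin.addCases_right, Finset.mul_sum] <;>
        · apply Finset.sum_congr rfl; intro x _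
          apply Finset.sum_congr rfl; intro y _
          ring
    rw [hjY, hjZ, cmiJ_bd, cmiJ_bd, cmiJ_smul τ hτ0, cmiJ_smul τ hτ0,
      cmiJ_smul (1 - τ) hτ1', cmiJ_smul (1 - τ) hτ1', hr0, hr1]
    ring

lemma joint_total {XX B : Type} [Fintype XX] [Fintype B] {mU mV : ℕ}
    (V : XX → B → ℝ) (hV : ∀ x, ∑ b, V x b = 1)
    (puv : Fin mU → Fin mV → ℝ) (pxv : Fin mV → XX → ℝ)
    (hsum : (∑ u, ∑ v, puv u v) = 1) (hxsum : ∀ v, ∑ x, pxv v x = 1) :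
    (∑ v, ∑ b, ∑ u, ∑ x, puv u v * pxv v x * V x b) = 1 := by
  calc (∑ v, ∑ b, ∑ u, ∑ x, puv u v * pxv v x * V x b)
      = ∑ v, ∑ u, ∑ x, ∑ b, puv u v * pxv v x * V x b := by
        refine Finset.sum_congr rfl fun v _ => ?_
        rw [Finset.sum_comm]
        exact Finset.sum_congr rfl fun u _ => Finset.sum_comm
    _ = ∑ v, ∑ u, ∑ x, puv u v * pxv v x := by
        refine Finset.sum_congr rfl fun v _ => Finset.sum_congr rfl fun u _ =>
          Finset.sum_congr rfl fun x _ => ?_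
        rw [← Finset.mul_sum, hV, mul_one]
    _ = ∑ v, ∑ u, puv u v := by
        refine Finset.sum_congr rfl fun v _ => Finset.sum_congr rfl fun u _ => ?_
        rw [← Finset.mul_sum, hxsum, mul_one]
    _ = 1 := by rw [Finset.sum_comm]; exact hsum

lemma bdd_SetS {X Y Z : Type} [Fintype X] [Fintype Y] [Fintype Z]
    (W : X → Y → Z → ℝ) (hW : ∀ x y z, 0 ≤ W x y z) (hW1 : ∀ x, ∑ y, ∑ z, W x y z = 1)
    (C : X → ℝ) (b : ℝ) : BddAbove (SetS W C b) := by
  refine ⟨Real.logb 2 (Fintype.card Y), fun r hr => ?_⟩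
  obtain ⟨mU, mV, puv, pxv, hnn, hsum, hxnn, hxsum, hcost, hr⟩ := hr
  have hYe : (fun (v : Fin mV) (y : Y) (u : Fin mU) =>
        ∑ x, ∑ z, puv u v * pxv v x * W x y z)
      = (fun v y u => ∑ x, puv u v * pxv v x * (∑ z, W x y z)) := by
    funext v y u
    exact Finset.sum_congr rfl fun x _ => (Finset.mul_sum _ _ _).symm
  have hZe : (fun (v : Fin mV) (z : Z) (u : Fin mU) =>
        ∑ x, ∑ y, puv u v * pxv v x * W x y z)
      = (fun v z u => ∑ x, puv u v * pxv v x * (∑ y, W x y z)) := by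
    funext v z u
    exact Finset.sum_congr rfl fun x _ => (Finset.mul_sum _ _ _).symm
  rw [hr, hYe, hZe]
  have hY1 : cmiJ (fun v y u => ∑ x, puv u v * pxv v x * (∑ z, W x y z))
      ≤ Real.logb 2 (Fintype.card Y) := by
    apply cmiJ_le_logb_card
    · intro v y u
      exact Finset.sum_nonneg fun x _ => mul_nonneg
        (mul_nonneg (hnn u v) (hxnn v x)) (Finset.sum_nonneg fun z _ => hW x y z)
    · exact joint_total _ (fun x => hW1 x) puv pxv hsum hxsum
  have hZ1 : 0 ≤ cmiJ (fun v z u => ∑ x, puv u v * pxv v x * (∑ y, W x y z)) := by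
    apply cmiJ_nonneg
    intro v z u
    exact Finset.sum_nonneg fun x _ => mul_nonneg
      (mul_nonneg (hnn u v) (hxnn v x)) (Finset.sum_nonneg fun y _ => hW x y z)
  linarith

lemma cmiJ_fin1 {B : Type*} [Fintype B] (p : Fin 1 → B → Fin 1 → ℝ)
    (hp : ∀ a b c, 0 ≤ p a b c) : cmiJ p = 0 := by
  rw [cmiJ]
  simp only [Fin.sum_univ_one]
  apply Finset.sum_eq_zero; intro b _
  rcases eq_or_lt_of_le (hp 0 b 0) with h0 | h0
  · rw [← h0, zero_mul]
  · have hS : 0 < ∑ b', p 0 b' 0 :=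
      h0.trans_le (Finset.single_le_sum (fun b' _ => hp 0 b' 0) (Finset.mem_univ b))
    have harg : (p 0 b 0 * ∑ b', p 0 b' 0) / ((∑ b', p 0 b' 0) * p 0 b 0) = 1 := by
      rw [mul_comm (∑ b', p 0 b' 0) (p 0 b 0)]
      exact div_self (by positivity)
    rw [harg, Real.logb_one, mul_zero]

lemma zero_mem_SetS {X Y Z : Type} [Fintype X] [Fintype Y] [Fintype Z] [Nonempty X]
    (W : X → Y → Z → ℝ) (hW : ∀ x y z, 0 ≤ W x y z) (hW1 : ∀ x, ∑ y, ∑ z, W x y z = 1)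
    (C : X → ℝ) {b : ℝ} (hb : (⨅ x, C x) ≤ b) : (0:ℝ) ∈ SetS W C b := by
  classical
  obtain ⟨x0, hx0⟩ := Finite.exists_min C
  refine ⟨1, 1, fun _ _ => 1, fun _ x => if x = x0 then 1 else 0,
    fun _ _ => zero_le_one, by simp, ?_, by simp, ?_, ?_⟩
  · intro v x; dsimp only; split <;> norm_num
  · have h1 : (∑ x, (∑ v : Fin 1, (∑ u : Fin 1, (1:ℝ)) *
        (if x = x0 then (1:ℝ) else 0)) * C x) = C x0 := by
      simp only [Fin.sum_univ_one, one_mul, ite_mul, zero_mul]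
      simp
    rw [h1]
    exact le_trans (le_ciInf hx0) hb
  · have hYnn : ∀ (v : Fin 1) (y : Y) (u : Fin 1), 0 ≤ ∑ x, ∑ z,
        (1:ℝ) * (if x = x0 then (1:ℝ) else 0) * W x y z := by
      intro v y u
      refine Finset.sum_nonneg fun x _ => Finset.sum_nonneg fun z _ => ?_
      have : (0:ℝ) ≤ (if x = x0 then (1:ℝ) else 0) := by split <;> norm_num
      have := mul_nonneg this (hW x y z)
      simpa using this
    have hZnn : ∀ (v : Fin 1) (z : Z) (u : Fin 1), 0 ≤ ∑ x, ∑ y,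
        (1:ℝ) * (if x = x0 then (1:ℝ) else 0) * W x y z := by
      intro v z u
      refine Finset.sum_nonneg fun x _ => Finset.sum_nonneg fun y _ => ?_
      have : (0:ℝ) ≤ (if x = x0 then (1:ℝ) else 0) := by split <;> norm_num
      have := mul_nonneg this (hW x y z)
      simpa using this
    rw [cmiJ_fin1 _ hYnn, cmiJ_fin1 _ hZnn, sub_zero]

lemma smul_csSup_le {s : Set ℝ} (hs : s.Nonempty) {c M : ℝ} (hc : 0 ≤ c)
    (h : ∀ r ∈ s, c * r ≤ M) : c * sSup s ≤ M := by
  rcases eq_or_lt_of_le hc with h0 | h0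
  · obtain ⟨r, hr⟩ := hs
    have := h r hr
    rw [← h0] at this ⊢
    simpa using this
  · rw [mul_comm, ← le_div_iff₀ h0]
    exact csSup_le hs fun r hr => (le_div_iff₀ h0).mpr (by linarith [h r hr])

/-- `b ↦ C̄(b)` is concave on `[c_min, ∞)`, where `c_min = min_x C(x)`. -/
theorem stmt2 {X Y Z : Type} [Fintype X] [Fintype Y] [Fintype Z] [Nonempty X]
    (W : X → Y → Z → ℝ) (hW : ∀ x y z, 0 ≤ W x y z) (hW1 : ∀ x, ∑ y, ∑ z, W x y z = 1)
    (C : X → ℝ) (hC : ∀ x, 0 ≤ C x) :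
    ConcaveOn ℝ (Set.Ici (⨅ x, C x)) (Cbar W C) := by
  constructor
  · exact convex_Ici _
  · intro x hx y hy a b ha hb hab
    simp only [smul_eq_mul]
    have hCx : Cbar W C = fun b => sSup (SetS W C b) := rfl
    rw [hCx]
    have hx' : (⨅ x, C x) ≤ x := hx
    have hy' : (⨅ x, C x) ≤ y := hy
    have hmid : (⨅ x, C x) ≤ a * x + b * y := by
      have h1 : a * (⨅ x, C x) + b * (⨅ x, C x) = ⨅ x, C x := by
        rw [← add_mul, hab, one_mul]
      linarith [mul_le_mul_of_nonneg_left hx' ha, mul_le_mul_of_nonneg_left hy' hb]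
    have hne_x : (SetS W C x).Nonempty := ⟨0, zero_mem_SetS W hW hW1 C hx'⟩
    have hne_y : (SetS W C y).Nonempty := ⟨0, zero_mem_SetS W hW hW1 C hy'⟩
    have hbdd : BddAbove (SetS W C (a * x + b * y)) := bdd_SetS W hW hW1 C _
    have key : ∀ r0 ∈ SetS W C x, ∀ r1 ∈ SetS W C y,
        a * r0 + b * r1 ≤ sSup (SetS W C (a * x + b * y)) := by
      intro r0 hr0 r1 hr1
      apply le_csSup hbdd
      have hb' : b = 1 - a := by linarith
      rw [hb']
      exact mem_mix W C ha (by linarith) hr0 hr1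
    have step : a * sSup (SetS W C x) ≤ sSup (SetS W C (a * x + b * y))
        - b * sSup (SetS W C y) := by
      apply smul_csSup_le hne_x ha
      intro r0 hr0
      have : b * sSup (SetS W C y) ≤ sSup (SetS W C (a * x + b * y)) - a * r0 := by
        apply smul_csSup_le hne_y hb
        intro r1 hr1
        linarith [key r0 hr0 r1 hr1]
      linarith
    linarith
end

section
/- For the wiretap channel of the previous statement, for every joint PMF P_{V,X} = P_{V,X̃,Z̃} with E[Z̃] ≤ 1/2 (and (Y,Z) generated from X = (X̃,Z̃) as before, with V−X−(Y,Z) a Markov chain), I(V;Y) − I(V;Z̃) ≤ 1/2, with the decomposition I(V;Y) − I(V;Z̃) = P(Z̃=1)·H(Y | Z̃=1) − I(X̃;Y | Z̃, V) − I(V; Z̃ | Y). -/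
open scoped BigOperators

/-- The conditional law of the legitimate receiver's output `Y = X̃·Z̃ + N·(1−Z̃)`
given the input pair `(x̃, z̃)`, with `N ~ Ber(1/2)` independent of the input. -/
noncomputable def chY (xt zt y : Bool) : ℝ :=
  if zt then (if y = xt then 1 else 0) else 1 / 2


set_option linter.unusedSectionVars false

namespace Stmt5Aux

open Real Finset

variable {V : Type} [Fintype V]

lemma chY_nonneg (x z y : Bool) : 0 ≤ chY x z y := by
  cases z <;> cases x <;> cases y <;> norm_num [chY]

lemma chY_sum (x z : Bool) : chY x z false + chY x z true = 1 := by
  cases z <;> cases x <;> norm_num [chY]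

noncomputable def qq (pV : V → Bool → Bool → ℝ) (v : V) (x z y : Bool) : ℝ :=
  pV v x z * chY x z y

noncomputable def mV (pV : V → Bool → Bool → ℝ) (v : V) : ℝ := ∑ x, ∑ z, pV v x z
noncomputable def pZv (pV : V → Bool → Bool → ℝ) (v : V) (z : Bool) : ℝ := ∑ x, pV v x z
noncomputable def pZ (pV : V → Bool → Bool → ℝ) (z : Bool) : ℝ := ∑ v, ∑ x, pV v x z
noncomputable def mVY (pV : V → Bool → Bool → ℝ) (v : V) (y : Bool) : ℝ :=
  ∑ x, ∑ z, qq pV v x z y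
noncomputable def mY (pV : V → Bool → Bool → ℝ) (y : Bool) : ℝ := ∑ v, mVY pV v y
noncomputable def m3 (pV : V → Bool → Bool → ℝ) (v : V) (z y : Bool) : ℝ :=
  ∑ x, qq pV v x z y
noncomputable def m2 (pV : V → Bool → Bool → ℝ) (z y : Bool) : ℝ := ∑ v, ∑ x, qq pV v x z y

variable (pV : V → Bool → Bool → ℝ)

-- structural facts
lemma mVY_sum (v : V) : ∑ y, mVY pV v y = mV pV v := by
  simp only [mVY, mV, qq, Fintype.sum_bool, chY]
  norm_num; ring

lemma m2_false (y : Bool) : m2 pV false y = pZ pV false * (1/2) := by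
  simp only [m2, pZ, qq, chY, Fintype.sum_bool, if_false, Finset.sum_mul]
  norm_num
  exact Finset.sum_congr rfl fun v _ => by ring

end Stmt5Aux

-- conversion lemmas (appended for testing)
namespace Stmt5Aux
open Real Finset
variable {V : Type} [Fintype V] (pV : V → Bool → Bool → ℝ)

lemma S1 : miJ (fun v y => ∑ x, ∑ z, pV v x z * chY x z y)
    = ∑ v, ∑ x, ∑ z, ∑ y, qq pV v x z y *
        Real.logb 2 (mVY pV v y / (mV pV v * mY pV y)) := by
  have h0 : (fun v y => ∑ x, ∑ z, pV v x z * chY x z y) = mVY pV := rfl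
  rw [h0]
  unfold miJ
  refine Finset.sum_congr rfl fun v _ => ?_
  have h1 : ∀ y, (∑ v', mVY pV v' y) = mY pV y := fun y => rfl
  have h2 : (∑ y', mVY pV v y') = mV pV v := mVY_sum pV v
  simp only [h1, h2]
  simp only [mVY, Fintype.sum_bool]
  ring

end Stmt5Aux

namespace Stmt5Aux
open Real Finset
variable {V : Type} [Fintype V] (pV : V → Bool → Bool → ℝ)

lemma pZv_sum (v : V) : ∑ z, pZv pV v z = mV pV v := by
  simp only [pZv, mV, Fintype.sum_bool]; ring

lemma S2 : miJ (fun v z => ∑ x, pV v x z)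
    = ∑ v, ∑ x, ∑ z, ∑ y, qq pV v x z y *
        Real.logb 2 (pZv pV v z / (mV pV v * pZ pV z)) := by
  have h0 : (fun v z => ∑ x, pV v x z) = pZv pV := rfl
  rw [h0]
  unfold miJ
  refine Finset.sum_congr rfl fun v _ => ?_
  have h1 : ∀ z, (∑ v', pZv pV v' z) = pZ pV z := fun z => rfl
  have h2 : (∑ z', pZv pV v z') = mV pV v := pZv_sum pV v
  simp only [h1, h2]
  simp only [pZv, qq, Fintype.sum_bool, chY]
  norm_num; ring

end Stmt5Aux

namespace Stmt5Aux
open Real Finset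
variable {V : Type} [Fintype V] (pV : V → Bool → Bool → ℝ)

lemma S3 (hpV : ∀ v x z, 0 ≤ pV v x z) :
    (∑ v, ∑ x, pV v x true) *
      (∑ y : Bool, -(((∑ v, ∑ x, pV v x true * chY x true y) / (∑ v, ∑ x, pV v x true)) *
        Real.logb 2 ((∑ v, ∑ x, pV v x true * chY x true y) / (∑ v, ∑ x, pV v x true))))
    = ∑ v, ∑ x, ∑ z, ∑ y, qq pV v x z y *
        (if z then -(Real.logb 2 (m2 pV true y / pZ pV true)) else 0) := by
  have hm2 : ∀ y, (∑ v, ∑ x, pV v x true * chY x true y) = m2 pV true y := fun _ => rfl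
  have hpz : (∑ v, ∑ x, pV v x true) = pZ pV true := rfl
  simp only [hm2, hpz]
  by_cases hs : pZ pV true = 0
  · have hz : ∀ v x, pV v x true = 0 := by
      intro v x
      have h1 := (Finset.sum_eq_zero_iff_of_nonneg
        (fun v _ => Finset.sum_nonneg fun x _ => hpV v x true)).mp hs v (mem_univ v)
      exact (Finset.sum_eq_zero_iff_of_nonneg (fun x _ => hpV v x true)).mp h1 x (mem_univ x)
    rw [hs, zero_mul]
    symm
    refine Finset.sum_eq_zero fun v _ => Finset.sum_eq_zero fun x _ => ?_
    simp [Fintype.sum_bool, qq, hz]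
  · calc pZ pV true * ∑ y, -((m2 pV true y / pZ pV true) *
          Real.logb 2 (m2 pV true y / pZ pV true))
        = ∑ y, -(m2 pV true y * Real.logb 2 (m2 pV true y / pZ pV true)) := by
          rw [Finset.mul_sum]
          refine Finset.sum_congr rfl fun y _ => ?_
          field_simp
      _ = ∑ y, ∑ v, ∑ x, qq pV v x true y *
            -(Real.logb 2 (m2 pV true y / pZ pV true)) := by
          refine Finset.sum_congr rfl fun y _ => ?_
          simp only [m2, mul_neg, Finset.sum_neg_distrib, Finset.sum_mul]
      _ = ∑ v, ∑ y, ∑ x, qq pV v x true y *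
            -(Real.logb 2 (m2 pV true y / pZ pV true)) := Finset.sum_comm
      _ = ∑ v, ∑ x, ∑ z, ∑ y, qq pV v x z y *
            (if z then -(Real.logb 2 (m2 pV true y / pZ pV true)) else 0) := by
          refine Finset.sum_congr rfl fun v _ => ?_
          simp [Fintype.sum_bool]
          ring

end Stmt5Aux

namespace Stmt5Aux
open Real Finset
variable {V : Type} [Fintype V] (pV : V → Bool → Bool → ℝ)

lemma S4 : cmiJ (fun (x y : Bool) (c : Bool × V) => pV c.2 x c.1 * chY x c.1 y)
    = ∑ v, ∑ x, ∑ z, ∑ y, qq pV v x z y *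
        Real.logb 2 ((qq pV v x z y * pZv pV v z) / (pV v x z * m3 pV v z y)) := by
  unfold cmiJ
  simp only [Fintype.sum_prod_type]
  have h1 : ∀ (v : V) (z : Bool), (∑ x' : Bool, ∑ y' : Bool, pV v x' z * chY x' z y')
      = pZv pV v z := by
    intro v z
    have h1' : (∑ x' : Bool, pV v x' z) = pZv pV v z := rfl
    cases z <;> · simp [← h1', Fintype.sum_bool, chY]; try ring
  have h2 : ∀ (v : V) (x z : Bool), (∑ y' : Bool, pV v x z * chY x z y') = pV v x z := by
    intro v x z
    cases z <;> cases x <;> · simp [Fintype.sum_bool, chY]; try ring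
  have h3 : ∀ (v : V) (z y : Bool), (∑ x' : Bool, pV v x' z * chY x' z y) = m3 pV v z y :=
    fun _ _ _ => rfl
  simp only [h1, h2, h3]
  calc ∑ x : Bool, ∑ y : Bool, ∑ z : Bool, ∑ v : V,
        pV v x z * chY x z y * Real.logb 2
          (pV v x z * chY x z y * pZv pV v z / (pV v x z * m3 pV v z y))
      = ∑ x : Bool, ∑ y : Bool, ∑ v : V, ∑ z : Bool,
        pV v x z * chY x z y * Real.logb 2
          (pV v x z * chY x z y * pZv pV v z / (pV v x z * m3 pV v z y)) := by
        exact Finset.sum_congr rfl fun x _ => Finset.sum_congr rfl fun y _ => Finset.sum_comm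
    _ = ∑ x : Bool, ∑ v : V, ∑ y : Bool, ∑ z : Bool,
        pV v x z * chY x z y * Real.logb 2
          (pV v x z * chY x z y * pZv pV v z / (pV v x z * m3 pV v z y)) := by
        exact Finset.sum_congr rfl fun x _ => Finset.sum_comm
    _ = ∑ v : V, ∑ x : Bool, ∑ y : Bool, ∑ z : Bool,
        pV v x z * chY x z y * Real.logb 2
          (pV v x z * chY x z y * pZv pV v z / (pV v x z * m3 pV v z y)) :=
        Finset.sum_comm
    _ = ∑ v, ∑ x, ∑ z, ∑ y, qq pV v x z y *
        Real.logb 2 ((qq pV v x z y * pZv pV v z) / (pV v x z * m3 pV v z y)) := by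
        refine Finset.sum_congr rfl fun v _ => Finset.sum_congr rfl fun x _ => ?_
        simp only [qq, Fintype.sum_bool]
        ring

lemma S5 : cmiJ (fun (v : V) (z y : Bool) => ∑ x, pV v x z * chY x z y)
    = ∑ v, ∑ x, ∑ z, ∑ y, qq pV v x z y *
        Real.logb 2 ((m3 pV v z y * mY pV y) / (mVY pV v y * m2 pV z y)) := by
  have h0 : (fun (v : V) (z y : Bool) => ∑ x, pV v x z * chY x z y) = m3 pV := rfl
  rw [h0]
  unfold cmiJ
  have h1 : ∀ y : Bool, (∑ v' : V, mVY pV v' y) = mY pV y := fun _ => rfl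
  have h2 : ∀ (v : V) (y : Bool), (∑ z' : Bool, m3 pV v z' y) = mVY pV v y := by
    intro v y; simp only [m3, mVY, Fintype.sum_bool]; ring
  have h3 : ∀ (z y : Bool), (∑ v' : V, m3 pV v' z y) = m2 pV z y := fun _ _ => rfl
  simp only [h2, h3, h1]
  refine Finset.sum_congr rfl fun v _ => ?_
  simp only [m3, Fintype.sum_bool]
  ring

end Stmt5Aux

namespace Stmt5Aux
open Real Finset
variable {V : Type} [Fintype V] (pV : V → Bool → Bool → ℝ)

lemma pointwise (hpV : ∀ v x z, 0 ≤ pV v x z) (v : V) (x z y : Bool) :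
    qq pV v x z y * Real.logb 2 (mVY pV v y / (mV pV v * mY pV y))
      + qq pV v x z y *
          Real.logb 2 ((qq pV v x z y * pZv pV v z) / (pV v x z * m3 pV v z y))
      + qq pV v x z y *
          Real.logb 2 ((m3 pV v z y * mY pV y) / (mVY pV v y * m2 pV z y))
    = qq pV v x z y * Real.logb 2 (pZv pV v z / (mV pV v * pZ pV z))
      + qq pV v x z y *
          (if z then -(Real.logb 2 (m2 pV true y / pZ pV true)) else 0) := by
  have hqn : ∀ (v : V) (x z y : Bool), 0 ≤ qq pV v x z y :=
    fun v x z y => mul_nonneg (hpV v x z) (chY_nonneg x z y)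
  rcases (hqn v x z y).eq_or_lt with h | h
  · rw [← h]; ring
  have hpv : 0 < pV v x z := by
    have hne : pV v x z ≠ 0 := fun h0 => by simp [qq, h0] at h
    exact (hpV v x z).lt_of_ne (Ne.symm hne)
  have hch : 0 < chY x z y := by
    have hne : chY x z y ≠ 0 := fun h0 => by simp [qq, h0] at h
    exact (chY_nonneg x z y).lt_of_ne (Ne.symm hne)
  have hpZv : 0 < pZv pV v z :=
    lt_of_lt_of_le hpv (Finset.single_le_sum (fun i _ => hpV v i z) (mem_univ x))
  have hmV : 0 < mV pV v := by
    have t1 : pV v x z ≤ ∑ z', pV v x z' :=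
      Finset.single_le_sum (fun i _ => hpV v x i) (mem_univ z)
    have t2 : (∑ z', pV v x z') ≤ mV pV v :=
      Finset.single_le_sum (f := fun x => ∑ z', pV v x z')
        (fun i _ => Finset.sum_nonneg fun j _ => hpV v i j) (mem_univ x)
    linarith
  have hpZ : 0 < pZ pV z :=
    lt_of_lt_of_le hpZv (Finset.single_le_sum (f := fun v => ∑ x, pV v x z)
      (fun i _ => Finset.sum_nonneg fun j _ => hpV i j z) (mem_univ v))
  have hm3 : 0 < m3 pV v z y :=
    lt_of_lt_of_le h (Finset.single_le_sum (fun i _ => hqn v i z y) (mem_univ x))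
  have hmVY : 0 < mVY pV v y := by
    have t1 : qq pV v x z y ≤ ∑ z', qq pV v x z' y :=
      Finset.single_le_sum (fun i _ => hqn v x i y) (mem_univ z)
    have t2 : (∑ z', qq pV v x z' y) ≤ mVY pV v y :=
      Finset.single_le_sum (f := fun x => ∑ z', qq pV v x z' y)
        (fun i _ => Finset.sum_nonneg fun j _ => hqn v i j y) (mem_univ x)
    linarith
  have hmY : 0 < mY pV y :=
    lt_of_lt_of_le hmVY (Finset.single_le_sum (f := fun v => mVY pV v y)
      (fun i _ => Finset.sum_nonneg fun j _ => Finset.sum_nonneg fun k _ => hqn i j k y)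
      (mem_univ v))
  have hm2 : 0 < m2 pV z y :=
    lt_of_lt_of_le hm3 (Finset.single_le_sum (f := fun v => ∑ x, qq pV v x z y)
      (fun i _ => Finset.sum_nonneg fun j _ => hqn i j z y) (mem_univ v))
  have hA1 : 0 < mVY pV v y / (mV pV v * mY pV y) := by positivity
  have hA4 : 0 < (qq pV v x z y * pZv pV v z) / (pV v x z * m3 pV v z y) := by positivity
  have hA5 : 0 < (m3 pV v z y * mY pV y) / (mVY pV v y * m2 pV z y) := by positivity
  cases z with
  | false =>
    have hqv : qq pV v x false y = pV v x false * (1 / 2) := by simp [qq, chY]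
    have hm2f : m2 pV false y = pZ pV false * (1 / 2) := m2_false pV y
    have hL : Real.logb 2 (mVY pV v y / (mV pV v * mY pV y))
        + Real.logb 2 ((qq pV v x false y * pZv pV v false) / (pV v x false * m3 pV v false y))
        + Real.logb 2 ((m3 pV v false y * mY pV y) / (mVY pV v y * m2 pV false y))
        = Real.logb 2 (pZv pV v false / (mV pV v * pZ pV false)) := by
      rw [← Real.logb_mul hA1.ne' hA4.ne', ← Real.logb_mul (mul_pos hA1 hA4).ne' hA5.ne']
      congr 1
      rw [hqv, hm2f]
      field_simp
    simp only [Bool.false_eq_true, if_false]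
    linear_combination qq pV v x false y * hL
  | true =>
    have hyx : y = x := by
      by_contra hne
      simp [chY, hne] at hch
    subst hyx
    have hqv : qq pV v y true y = pV v y true := by simp [qq, chY]
    have hAM : 0 < m2 pV true y / pZ pV true := by positivity
    have hL : Real.logb 2 (mVY pV v y / (mV pV v * mY pV y))
        + Real.logb 2 ((qq pV v y true y * pZv pV v true) / (pV v y true * m3 pV v true y))
        + Real.logb 2 ((m3 pV v true y * mY pV y) / (mVY pV v y * m2 pV true y))
        + Real.logb 2 (m2 pV true y / pZ pV true)
        = Real.logb 2 (pZv pV v true / (mV pV v * pZ pV true)) := by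
      rw [← Real.logb_mul hA1.ne' hA4.ne', ← Real.logb_mul (mul_pos hA1 hA4).ne' hA5.ne',
        ← Real.logb_mul (mul_pos (mul_pos hA1 hA4) hA5).ne' hAM.ne']
      congr 1
      rw [hqv]
      field_simp
    simp only [if_true]
    linear_combination qq pV v y true y * hL

end Stmt5Aux

namespace Stmt5Aux
open Real Finset

lemma cmiJ_nonneg {A B C : Type*} [Fintype A] [Fintype B] [Fintype C]
    (p : A → B → C → ℝ) (hp : ∀ a b c, 0 ≤ p a b c) : 0 ≤ cmiJ p := by
  have key : ∀ a b c,
      p a b c - (∑ b', p a b' c) * (∑ a', p a' b c) / (∑ a', ∑ b', p a' b' c)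
        ≤ p a b c * Real.log
            ((p a b c * (∑ a', ∑ b', p a' b' c)) /
              ((∑ b', p a b' c) * (∑ a', p a' b c))) := by
    intro a b c
    set pac := ∑ b', p a b' c with hpac
    set pbc := ∑ a', p a' b c with hpbc
    set pc := ∑ a', ∑ b', p a' b' c with hpc
    have hac : 0 ≤ pac := Finset.sum_nonneg fun i _ => hp a i c
    have hbc : 0 ≤ pbc := Finset.sum_nonneg fun i _ => hp i b c
    have hc : 0 ≤ pc := Finset.sum_nonneg fun i _ => Finset.sum_nonneg fun j _ => hp i j c
    rcases (hp a b c).eq_or_lt with h | h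
    · rw [← h]
      simp only [zero_mul, zero_sub]
      exact neg_nonpos.mpr (by positivity)
    · have hacp : 0 < pac :=
        lt_of_lt_of_le h (Finset.single_le_sum (fun i _ => hp a i c) (mem_univ b))
      have hbcp : 0 < pbc :=
        lt_of_lt_of_le h (Finset.single_le_sum (fun i _ => hp i b c) (mem_univ a))
      have hcp : 0 < pc :=
        lt_of_lt_of_le hacp (Finset.single_le_sum (f := fun a => ∑ b', p a b' c)
          (fun i _ => Finset.sum_nonneg fun j _ => hp i j c) (mem_univ a))
      have hX : 0 < p a b c * pc / (pac * pbc) := by positivity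
      have hlog := Real.log_le_sub_one_of_pos (inv_pos.mpr hX)
      rw [Real.log_inv] at hlog
      have h2 : 1 - (p a b c * pc / (pac * pbc))⁻¹
          ≤ Real.log (p a b c * pc / (pac * pbc)) := by linarith
      have h3 : p a b c * (1 - (p a b c * pc / (pac * pbc))⁻¹)
          ≤ p a b c * Real.log (p a b c * pc / (pac * pbc)) :=
        mul_le_mul_of_nonneg_left h2 h.le
      have h4 : p a b c * (1 - (p a b c * pc / (pac * pbc))⁻¹)
          = p a b c - pac * pbc / pc := by
        field_simp
      linarith
  have hsum : 0 ≤ ∑ a, ∑ b, ∑ c, p a b c * Real.log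
      ((p a b c * (∑ a', ∑ b', p a' b' c)) /
        ((∑ b', p a b' c) * (∑ a', p a' b c))) := by
    have r1 : ∀ (f : A → B → C → ℝ),
        (∑ a, ∑ b, ∑ c, f a b c) = ∑ c, ∑ a, ∑ b, f a b c := by
      intro f
      calc ∑ a, ∑ b, ∑ c, f a b c = ∑ a, ∑ c, ∑ b, f a b c :=
            Finset.sum_congr rfl fun a _ => Finset.sum_comm
        _ = ∑ c, ∑ a, ∑ b, f a b c := Finset.sum_comm
    have e2 : ∑ a, ∑ b, ∑ c,
        (∑ b', p a b' c) * (∑ a', p a' b c) / (∑ a', ∑ b', p a' b' c)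
        = ∑ a, ∑ b, ∑ c, p a b c := by
      rw [r1 (fun a b c => (∑ b', p a b' c) * (∑ a', p a' b c) / (∑ a', ∑ b', p a' b' c)),
        r1 p]
      refine Finset.sum_congr rfl fun c _ => ?_
      have step : ∑ a, ∑ b, (∑ b', p a b' c) * (∑ a', p a' b c) / (∑ a', ∑ b', p a' b' c)
          = (∑ a, ∑ b', p a b' c) * (∑ b, ∑ a', p a' b c) / (∑ a', ∑ b', p a' b' c) := by
        rw [Finset.sum_mul, Finset.sum_div]
        refine Finset.sum_congr rfl fun a _ => ?_
        rw [Finset.mul_sum, Finset.sum_div]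
      rw [step]
      have hb : (∑ b, ∑ a', p a' b c) = ∑ a', ∑ b', p a' b' c := Finset.sum_comm
      rw [hb]
      rcases eq_or_ne (∑ a', ∑ b', p a' b' c) 0 with h0 | h0
      · rw [h0]; simp
      · field_simp
    have e1 : ∑ a, ∑ b, ∑ c,
        (p a b c - (∑ b', p a b' c) * (∑ a', p a' b c) / (∑ a', ∑ b', p a' b' c)) = 0 := by
      simp only [Finset.sum_sub_distrib]
      rw [e2, sub_self]
    calc (0:ℝ) = ∑ a, ∑ b, ∑ c,
        (p a b c - (∑ b', p a b' c) * (∑ a', p a' b c) / (∑ a', ∑ b', p a' b' c)) := e1.symm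
      _ ≤ _ := by
        refine Finset.sum_le_sum fun a _ => Finset.sum_le_sum fun b _ =>
          Finset.sum_le_sum fun c _ => key a b c
  have hcm : cmiJ p = (∑ a, ∑ b, ∑ c, p a b c * Real.log
      ((p a b c * (∑ a', ∑ b', p a' b' c)) /
        ((∑ b', p a b' c) * (∑ a', p a' b c)))) / Real.log 2 := by
    unfold cmiJ
    simp only [Real.logb, Finset.sum_div, mul_div_assoc]
  rw [hcm]
  exact div_nonneg hsum (Real.log_nonneg one_le_two)

end Stmt5Aux

namespace Stmt5Aux
open Real Finset
variable {V : Type} [Fintype V] (pV : V → Bool → Bool → ℝ)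

lemma Hbound (hpV : ∀ v x z, 0 ≤ pV v x z)
    (hcost : (∑ v, ∑ x, pV v x true) ≤ 1 / 2) :
    (∑ v, ∑ x, pV v x true) *
      (∑ y : Bool, -(((∑ v, ∑ x, pV v x true * chY x true y) / (∑ v, ∑ x, pV v x true)) *
        Real.logb 2 ((∑ v, ∑ x, pV v x true * chY x true y) / (∑ v, ∑ x, pV v x true))))
      ≤ 1 / 2 := by
  have hm2 : ∀ y, (∑ v, ∑ x, pV v x true * chY x true y) = m2 pV true y := fun _ => rfl
  have hpz : (∑ v, ∑ x, pV v x true) = pZ pV true := rfl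
  simp only [hm2, hpz]
  rw [hpz] at hcost
  have hs0 : 0 ≤ pZ pV true :=
    Finset.sum_nonneg fun i _ => Finset.sum_nonneg fun j _ => hpV i j true
  have hmn : ∀ y, 0 ≤ m2 pV true y := fun y =>
    Finset.sum_nonneg fun i _ => Finset.sum_nonneg fun j _ =>
      mul_nonneg (hpV i j true) (chY_nonneg j true y)
  have hmsum : m2 pV true false + m2 pV true true = pZ pV true := by
    simp only [m2, pZ, qq, ← Finset.sum_add_distrib]
    refine Finset.sum_congr rfl fun v _ => Finset.sum_congr rfl fun x _ => ?_
    rw [← mul_add, chY_sum, mul_one]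
  rcases hs0.eq_or_lt with hs | hs
  · rw [← hs, zero_mul]; norm_num
  · set s := pZ pV true with hsdef
    set a := m2 pV true false / s with hadef
    have ha0 : 0 ≤ a := div_nonneg (hmn false) hs0
    have ha1 : a ≤ 1 := by
      rw [hadef, div_le_one hs]
      have := hmn true; linarith
    have ht : m2 pV true true / s = 1 - a := by
      rw [hadef, eq_sub_iff_add_eq, ← add_div, add_comm, hmsum, div_self hs.ne']
    have hinner : (∑ y : Bool, -((m2 pV true y / s) * Real.logb 2 (m2 pV true y / s)))
        = binEntropy a / Real.log 2 := by
      rw [Fintype.sum_bool, ht, ← hadef]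
      simp only [Real.logb, binEntropy]
      rw [Real.log_inv, Real.log_inv]
      field_simp
      ring
    rw [hinner]
    have hb1 : binEntropy a ≤ Real.log 2 := binEntropy_le_log_two
    have hb0 : 0 ≤ binEntropy a := binEntropy_nonneg ha0 ha1
    have hlog2 : 0 < Real.log 2 := Real.log_pos one_lt_two
    have hin1 : binEntropy a / Real.log 2 ≤ 1 := by
      rw [div_le_one hlog2]; exact hb1
    calc s * (binEntropy a / Real.log 2) ≤ s * 1 :=
          mul_le_mul_of_nonneg_left hin1 hs.le
      _ = s := mul_one s
      _ ≤ 1 / 2 := hcost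

end Stmt5Aux

namespace Stmt5Aux
open Real Finset
variable {V : Type} [Fintype V] (pV : V → Bool → Bool → ℝ)

lemma main_eq (hpV : ∀ v x z, 0 ≤ pV v x z) :
    (∑ v, ∑ x, ∑ z, ∑ y, qq pV v x z y *
        Real.logb 2 (mVY pV v y / (mV pV v * mY pV y)))
      - (∑ v, ∑ x, ∑ z, ∑ y, qq pV v x z y *
          Real.logb 2 (pZv pV v z / (mV pV v * pZ pV z)))
    = (∑ v, ∑ x, ∑ z, ∑ y, qq pV v x z y *
          (if z then -(Real.logb 2 (m2 pV true y / pZ pV true)) else 0))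
      - (∑ v, ∑ x, ∑ z, ∑ y, qq pV v x z y *
          Real.logb 2 ((qq pV v x z y * pZv pV v z) / (pV v x z * m3 pV v z y)))
      - (∑ v, ∑ x, ∑ z, ∑ y, qq pV v x z y *
          Real.logb 2 ((m3 pV v z y * mY pV y) / (mVY pV v y * m2 pV z y))) := by
  have key :
      (∑ v, ∑ x, ∑ z, ∑ y, qq pV v x z y *
          Real.logb 2 (mVY pV v y / (mV pV v * mY pV y)))
        + (∑ v, ∑ x, ∑ z, ∑ y, qq pV v x z y *
            Real.logb 2 ((qq pV v x z y * pZv pV v z) / (pV v x z * m3 pV v z y)))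
        + (∑ v, ∑ x, ∑ z, ∑ y, qq pV v x z y *
            Real.logb 2 ((m3 pV v z y * mY pV y) / (mVY pV v y * m2 pV z y)))
      = (∑ v, ∑ x, ∑ z, ∑ y, qq pV v x z y *
            Real.logb 2 (pZv pV v z / (mV pV v * pZ pV z)))
        + (∑ v, ∑ x, ∑ z, ∑ y, qq pV v x z y *
            (if z then -(Real.logb 2 (m2 pV true y / pZ pV true)) else 0)) := by
    simp only [← Finset.sum_add_distrib]
    refine Finset.sum_congr rfl fun v _ => Finset.sum_congr rfl fun x _ =>
      Finset.sum_congr rfl fun z _ => Finset.sum_congr rfl fun y _ => ?_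
    linarith [pointwise pV hpV v x z y]
  linarith

end Stmt5Aux


/-- For the binary example channel, for every joint PMF `P_{V,X̃,Z̃}`
with `E[Z̃] ≤ 1/2` (and `V−(X̃,Z̃)−(Y,Z̃)` Markov, `Y` generated by the channel),
`I(V;Y) − I(V;Z̃) = P(Z̃=1)·H(Y|Z̃=1) − I(X̃;Y|Z̃,V) − I(V;Z̃|Y)` and this is `≤ 1/2`. -/
theorem stmt5 {V : Type} [Fintype V]
    (pV : V → Bool → Bool → ℝ) (hpV : ∀ v x z, 0 ≤ pV v x z)
    (hpV1 : ∑ v, ∑ x, ∑ z, pV v x z = 1)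
    (hcost : (∑ v, ∑ x, pV v x true) ≤ 1 / 2) :
    miJ (fun v y => ∑ x, ∑ z, pV v x z * chY x z y)
      - miJ (fun v z => ∑ x, pV v x z)
      = (∑ v, ∑ x, pV v x true) *
          (∑ y : Bool, -(((∑ v, ∑ x, pV v x true * chY x true y) / (∑ v, ∑ x, pV v x true)) *
            Real.logb 2 ((∑ v, ∑ x, pV v x true * chY x true y) / (∑ v, ∑ x, pV v x true))))
        - cmiJ (fun (x y : Bool) (c : Bool × V) => pV c.2 x c.1 * chY x c.1 y)
        - cmiJ (fun (v : V) (z y : Bool) => ∑ x, pV v x z * chY x z y) ∧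
    miJ (fun v y => ∑ x, ∑ z, pV v x z * chY x z y)
      - miJ (fun v z => ∑ x, pV v x z) ≤ 1 / 2 := by
  have heq : miJ (fun v y => ∑ x, ∑ z, pV v x z * chY x z y)
      - miJ (fun v z => ∑ x, pV v x z)
      = (∑ v, ∑ x, pV v x true) *
          (∑ y : Bool, -(((∑ v, ∑ x, pV v x true * chY x true y) / (∑ v, ∑ x, pV v x true)) *
            Real.logb 2 ((∑ v, ∑ x, pV v x true * chY x true y) / (∑ v, ∑ x, pV v x true))))
        - cmiJ (fun (x y : Bool) (c : Bool × V) => pV c.2 x c.1 * chY x c.1 y)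
        - cmiJ (fun (v : V) (z y : Bool) => ∑ x, pV v x z * chY x z y) := by
    rw [Stmt5Aux.S1 pV, Stmt5Aux.S2 pV, Stmt5Aux.S3 pV hpV, Stmt5Aux.S4 pV,
      Stmt5Aux.S5 pV]
    exact Stmt5Aux.main_eq pV hpV
  refine ⟨heq, ?_⟩
  rw [heq]
  have hcm1 : 0 ≤ cmiJ (fun (x y : Bool) (c : Bool × V) => pV c.2 x c.1 * chY x c.1 y) :=
    Stmt5Aux.cmiJ_nonneg _ fun a b c => mul_nonneg (hpV c.2 a c.1) (Stmt5Aux.chY_nonneg a c.1 b)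
  have hcm2 : 0 ≤ cmiJ (fun (v : V) (z y : Bool) => ∑ x, pV v x z * chY x z y) :=
    Stmt5Aux.cmiJ_nonneg _ fun a b c =>
      Finset.sum_nonneg fun x _ => mul_nonneg (hpV a x b) (Stmt5Aux.chY_nonneg x b c)
  have hH := Stmt5Aux.Hbound pV hpV hcost
  linarith
end

section
/- In the single-auxiliary suboptimality argument: if P(Z̃=1)=1/2, H(Y|Z̃=1)=1 (so Y|{Z̃=1} is uniform on {0,1}), I(X̃;Y|Z̃,V)=0, and I(V;Z̃|Y)=0 hold for the channel Y = X̃Z̃ + N(1−Z̃), Z = Z̃, N ~ Ber(1/2) independent, then Y is independent of Z̃, and moreover (V,Y) is jointly independent of Z̃, and I(V;Y|Z̃=1) = 1. -/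
open scoped BigOperators

private lemma key_ineq (f g : ℝ) (hf : 0 ≤ f) (hg : 0 ≤ g) (h : f ≠ 0 → g ≠ 0) :
    f - g ≤ f * Real.log (f / g) := by
  rcases eq_or_lt_of_le hf with h0 | h0
  · simp [← h0]; linarith
  · have hg' : 0 < g := lt_of_le_of_ne hg (Ne.symm (h h0.ne'))
    have hl : Real.log (g / f) ≤ g / f - 1 := Real.log_le_sub_one_of_pos (div_pos hg' h0)
    have hinv : Real.log (f / g) = - Real.log (g / f) := by
      rw [← Real.log_inv]; congr 1; field_simp
    rw [hinv]
    have h2 : f * (g / f - 1) = g - f := by field_simp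
    nlinarith [mul_le_mul_of_nonneg_left hl hf]

private lemma key_eq (f g : ℝ) (hf : 0 ≤ f) (hg : 0 ≤ g) (h : f ≠ 0 → g ≠ 0)
    (he : f * Real.log (f / g) = f - g) : f = g := by
  rcases eq_or_lt_of_le hf with h0 | h0
  · rw [← h0] at he ⊢; simp at he; linarith
  · have hg' : 0 < g := lt_of_le_of_ne hg (Ne.symm (h h0.ne'))
    by_contra hne
    have hne' : g / f ≠ 1 := by
      intro hh
      rw [div_eq_one_iff_eq h0.ne'] at hh
      exact hne hh.symm
    have hl : Real.log (g / f) < g / f - 1 := Real.log_lt_sub_one_of_pos (div_pos hg' h0) hne'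
    have hinv : Real.log (f / g) = - Real.log (g / f) := by
      rw [← Real.log_inv]; congr 1; field_simp
    rw [hinv] at he
    have h2 : f * (g / f - 1) = g - f := by field_simp
    nlinarith [mul_lt_mul_of_pos_left hl h0]

private lemma logsum {ι : Type*} [Fintype ι] (f g : ι → ℝ) (hf : ∀ i, 0 ≤ f i)
    (hg : ∀ i, 0 ≤ g i) (hfg : ∀ i, f i ≠ 0 → g i ≠ 0)
    (hs : ∑ i, f i = ∑ i, g i)
    (hz : ∑ i, f i * Real.logb 2 (f i / g i) = 0) : ∀ i, f i = g i := by
  have hlog2 : Real.log 2 ≠ 0 := by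
    have : (0:ℝ) < Real.log 2 := Real.log_pos (by norm_num)
    linarith
  have hz' : ∑ i, f i * Real.log (f i / g i) = 0 := by
    have he : ∑ i, f i * Real.logb 2 (f i / g i)
        = (∑ i, f i * Real.log (f i / g i)) / Real.log 2 := by
      rw [Finset.sum_div]
      exact Finset.sum_congr rfl fun i _ => by rw [Real.logb]; ring
    rw [he, div_eq_zero_iff] at hz
    rcases hz with hz | hz
    · exact hz
    · exact absurd hz hlog2
  have hle : ∀ i ∈ Finset.univ, f i - g i ≤ f i * Real.log (f i / g i) :=
    fun i _ => key_ineq _ _ (hf i) (hg i) (hfg i)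
  have hsum : ∑ i, (f i - g i) = ∑ i, f i * Real.log (f i / g i) := by
    rw [hz', Finset.sum_sub_distrib, hs, sub_self]
  have heq := (Finset.sum_eq_sum_iff_of_le hle).mp hsum
  intro i
  have := heq i (Finset.mem_univ i)
  exact key_eq _ _ (hf i) (hg i) (hfg i) this.symm


private lemma ent_half (a b : ℝ) (ha : 0 ≤ a) (hb : 0 ≤ b) (hab : a + b = 1)
    (h : -(a * Real.logb 2 a) + -(b * Real.logb 2 b) = 1) : a = 1/2 ∧ b = 1/2 := by
  have hterm : ∀ x : ℝ, 0 ≤ x → x * Real.logb 2 (x / (1/2)) = x * Real.logb 2 x + x := by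
    intro x hx
    rcases eq_or_lt_of_le hx with h0 | h0
    · rw [← h0]; simp
    · have : x / (1/2) = 2 * x := by ring
      rw [this, Real.logb_mul (by norm_num) h0.ne', Real.logb_self_eq_one (by norm_num)]
      ring
  have key := logsum (ι := Bool) (fun t => if t then b else a) (fun _ => 1/2)
    (fun t => by split <;> assumption)
    (fun _ => by norm_num)
    (fun _ _ => by norm_num)
    (by rw [Fintype.sum_bool]; norm_num; linarith)
    (by
      rw [Fintype.sum_bool]
      simp only [reduceIte, Bool.false_eq_true, if_false, if_true]
      rw [hterm b hb, hterm a ha]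
      linarith)
  have k1 := key false
  have k2 := key true
  norm_num at k1 k2
  exact ⟨k1, k2⟩

private lemma cmi_fact {A B C : Type*} [Fintype A] [Fintype B] [Fintype C]
    (p : A → B → C → ℝ) (hp : ∀ a b c, 0 ≤ p a b c) (h : cmiJ p = 0) :
    ∀ a b c, p a b c * (∑ a', ∑ b', p a' b' c) = (∑ b', p a b' c) * (∑ a', p a' b c) := by
  classical
  set m : C → ℝ := fun c => ∑ a', ∑ b', p a' b' c with hm
  set pa : A → C → ℝ := fun a c => ∑ b', p a b' c with hpa
  set pb : B → C → ℝ := fun b c => ∑ a', p a' b c with hpb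
  have hpa0 : ∀ a c, 0 ≤ pa a c := fun a c => Finset.sum_nonneg fun _ _ => hp _ _ _
  have hpb0 : ∀ b c, 0 ≤ pb b c := fun b c => Finset.sum_nonneg fun _ _ => hp _ _ _
  have hm0 : ∀ c, 0 ≤ m c := fun c => Finset.sum_nonneg fun _ _ => hpa0 _ _
  have hle_pa : ∀ a b c, p a b c ≤ pa a c := fun a b c =>
    Finset.single_le_sum (f := fun b' => p a b' c) (fun _ _ => hp _ _ _) (Finset.mem_univ b)
  have hle_pb : ∀ a b c, p a b c ≤ pb b c := fun a b c =>
    Finset.single_le_sum (f := fun a' => p a' b c) (fun _ _ => hp _ _ _) (Finset.mem_univ a)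
  have hle_m : ∀ a c, pa a c ≤ m c := fun a c =>
    Finset.single_le_sum (f := fun a' => pa a' c) (fun _ _ => hpa0 _ _) (Finset.mem_univ a)
  -- index type
  set F : A × B × C → ℝ := fun i => p i.1 i.2.1 i.2.2 with hF
  set G : A × B × C → ℝ := fun i =>
    if m i.2.2 = 0 then 0 else pa i.1 i.2.2 * pb i.2.1 i.2.2 / m i.2.2 with hG
  have hF0 : ∀ i, 0 ≤ F i := fun i => hp _ _ _
  have hG0 : ∀ i, 0 ≤ G i := by
    intro i; simp only [hG]
    split
    · exact le_refl 0
    · exact div_nonneg (mul_nonneg (hpa0 _ _) (hpb0 _ _)) (hm0 _)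
  have hFG : ∀ i, F i ≠ 0 → G i ≠ 0 := by
    rintro ⟨a, b, c⟩ hFi
    have hppos : 0 < p a b c := lt_of_le_of_ne (hp a b c) (Ne.symm hFi)
    have h1 : 0 < pa a c := lt_of_lt_of_le hppos (hle_pa a b c)
    have h2 : 0 < pb b c := lt_of_lt_of_le hppos (hle_pb a b c)
    have h3 : 0 < m c := lt_of_lt_of_le h1 (hle_m a c)
    simp only [hG, if_neg h3.ne']
    positivity
  have hpa_sum : ∀ c, ∑ a, pa a c = m c := fun c => rfl
  have hpb_sum : ∀ c, ∑ b, pb b c = m c := fun c => Finset.sum_comm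
  have hswap : ∀ (M : Type) [AddCommMonoid M] (q : A → B → C → M),
      ∑ a, ∑ b, ∑ c, q a b c = ∑ c, ∑ a, ∑ b, q a b c := by
    intro M _ q
    calc ∑ a, ∑ b, ∑ c, q a b c = ∑ a, ∑ c, ∑ b, q a b c :=
          Finset.sum_congr rfl fun a _ => Finset.sum_comm
      _ = ∑ c, ∑ a, ∑ b, q a b c := Finset.sum_comm
  have hprod3 : ∀ (q : A → B → C → ℝ),
      ∑ i : A × B × C, q i.1 i.2.1 i.2.2 = ∑ a, ∑ b, ∑ c, q a b c := by
    intro q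
    rw [Fintype.sum_prod_type]
    exact Finset.sum_congr rfl fun a _ => Fintype.sum_prod_type _
  have hsum : ∑ i, F i = ∑ i, G i := by
    have hL : ∑ i, F i = ∑ c, m c := by
      rw [hprod3, hswap]
    have hR : ∑ i, G i = ∑ c, m c := by
      rw [hprod3 (fun a b c => if m c = 0 then 0 else pa a c * pb b c / m c), hswap]
      apply Finset.sum_congr rfl
      intro c _
      by_cases hc : m c = 0
      · simp [hc]
      · simp only [if_neg hc]
        rw [show (∑ x : A, ∑ y : B, pa x c * pb y c / m c) = ∑ x : A, pa x c * m c / m c from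
          Finset.sum_congr rfl fun a _ => by rw [← Finset.sum_div, ← Finset.mul_sum, hpb_sum]]
        rw [← Finset.sum_div, ← Finset.sum_mul, hpa_sum, mul_div_assoc, div_self hc, mul_one]
    rw [hL, hR]
  have hz : ∑ i, F i * Real.logb 2 (F i / G i) = 0 := by
    have e : ∑ i : A × B × C, F i * Real.logb 2 (F i / G i)
        = ∑ a, ∑ b, ∑ c, p a b c *
            Real.logb 2 (p a b c / (if m c = 0 then 0 else pa a c * pb b c / m c)) := by
      rw [Fintype.sum_prod_type]
      exact Finset.sum_congr rfl fun a _ => Fintype.sum_prod_type _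
    rw [e]
    conv_rhs => rw [← h]
    unfold cmiJ
    apply Finset.sum_congr rfl; intro a _
    apply Finset.sum_congr rfl; intro b _
    apply Finset.sum_congr rfl; intro c _
    by_cases hpz : p a b c = 0
    · rw [hpz]; ring
    · have hppos : 0 < p a b c := lt_of_le_of_ne (hp a b c) (Ne.symm hpz)
      have h1 : 0 < pa a c := lt_of_lt_of_le hppos (hle_pa a b c)
      have h2 : 0 < pb b c := lt_of_lt_of_le hppos (hle_pb a b c)
      have h3 : 0 < m c := lt_of_lt_of_le h1 (hle_m a c)
      rw [if_neg h3.ne']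
      have : p a b c / (pa a c * pb b c / m c) = p a b c * m c / (pa a c * pb b c) :=
        div_div_eq_mul_div _ _ _
      rw [this]
  have key := logsum F G hF0 hG0 hFG hsum hz
  intro a b c
  have hk : p a b c = if m c = 0 then 0 else pa a c * pb b c / m c := key (a, b, c)
  show p a b c * m c = pa a c * pb b c
  by_cases hc : m c = 0
  · have hpac : pa a c = 0 := le_antisymm (hc ▸ hle_m a c) (hpa0 a c)
    have hpabc : p a b c = 0 := le_antisymm (hpac ▸ hle_pa a b c) (hp a b c)
    rw [hpabc, hpac, zero_mul, zero_mul]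
  · rw [if_neg hc] at hk
    rw [hk, div_mul_cancel₀ _ hc]

/-- For the binary example channel: if `P(Z̃=1) = 1/2`,
`H(Y|Z̃=1) = 1`, `I(X̃;Y|Z̃,V) = 0` and `I(V;Z̃|Y) = 0`, then `Y ⫫ Z̃`, moreover
`(V,Y) ⫫ Z̃`, and `I(V;Y|Z̃=1) = 1`. -/
theorem stmt7 {V : Type} [Fintype V]
    (pV : V → Bool → Bool → ℝ) (hpV : ∀ v x z, 0 ≤ pV v x z)
    (hpV1 : ∑ v, ∑ x, ∑ z, pV v x z = 1)
    (h1 : (∑ v, ∑ x, pV v x true) = 1 / 2)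
    (h2 : (∑ y : Bool, -(((∑ v, ∑ x, pV v x true * chY x true y) / (∑ v, ∑ x, pV v x true)) *
      Real.logb 2 ((∑ v, ∑ x, pV v x true * chY x true y) / (∑ v, ∑ x, pV v x true)))) = 1)
    (h3 : cmiJ (fun (x y : Bool) (c : Bool × V) => pV c.2 x c.1 * chY x c.1 y) = 0)
    (h4 : cmiJ (fun (v : V) (z y : Bool) => ∑ x, pV v x z * chY x z y) = 0) :
    (∀ y z : Bool, (∑ v, ∑ x, pV v x z * chY x z y)
        = (∑ v, ∑ x, ∑ z', pV v x z' * chY x z' y) * (∑ v, ∑ x, pV v x z)) ∧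
    (∀ (v : V) (y z : Bool), (∑ x, pV v x z * chY x z y)
        = (∑ x, ∑ z', pV v x z' * chY x z' y) * (∑ v', ∑ x, pV v' x z)) ∧
    miJ (fun (v : V) (y : Bool) =>
        (∑ x, pV v x true * chY x true y) / (∑ v', ∑ x, pV v' x true)) = 1 := by
  classical
  -- basic nonnegativity of the channel
  have hch : ∀ x z y, 0 ≤ chY x z y := by
    intro x z y
    unfold chY
    rcases z with _ | _ <;> simp <;> split <;> norm_num
  -- split total mass
  have hsplit : ∑ v, ∑ x, ∑ z, pV v x z
      = (∑ v, ∑ x, pV v x true) + (∑ v, ∑ x, pV v x false) := by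
    simp [Fintype.sum_bool, Finset.sum_add_distrib]
  have hs0 : (∑ v, ∑ x, pV v x false) = 1/2 := by
    rw [hsplit, h1] at hpV1; linarith
  -- per-v value of the numerator at z = true
  have hqv : ∀ (v : V) (y : Bool), (∑ x, pV v x true * chY x true y) = pV v y true := by
    intro v y
    rcases y with _ | _ <;> simp [chY, Fintype.sum_bool]
  have hq : ∀ y, (∑ v, ∑ x, pV v x true * chY x true y) = ∑ v, pV v y true := by
    intro y
    exact Finset.sum_congr rfl fun v _ => hqv v y
  have hqsum : (∑ v, pV v false true) + (∑ v, pV v true true) = 1/2 := by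
    rw [← h1, ← Finset.sum_add_distrib]
    apply Finset.sum_congr rfl
    intro v _
    rw [Fintype.sum_bool]
    ring
  have ha0 : 0 ≤ ∑ v, pV v false true := Finset.sum_nonneg fun v _ => hpV v false true
  have hb0 : 0 ≤ ∑ v, pV v true true := Finset.sum_nonneg fun v _ => hpV v true true
  -- entropy condition gives the two marginals are 1/4 each
  have hquarter : (∑ v, pV v false true) = 1/4 ∧ (∑ v, pV v true true) = 1/4 := by
    have h2' := h2
    rw [Fintype.sum_bool] at h2'
    rw [hq true, hq false, h1] at h2'
    simp only [show ∀ x : ℝ, x / (1/2) = 2 * x from fun x => by ring] at h2'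
    have hent := ent_half (2 * ∑ v, pV v false true) (2 * ∑ v, pV v true true)
      (by linarith) (by linarith) (by linarith)
      (by linarith)
    constructor <;> [linarith [hent.1]; linarith [hent.2]]
  -- marginal at z = false
  have hr : ∀ y, (∑ v, ∑ x, pV v x false * chY x false y) = 1/4 := by
    intro y
    have e : ∀ v, (∑ x, pV v x false * chY x false y) = (∑ x, pV v x false) * (1/2) := by
      intro v
      rw [Finset.sum_mul]
      exact Finset.sum_congr rfl fun x _ => by simp [chY]
    rw [Finset.sum_congr rfl fun v _ => e v, ← Finset.sum_mul, hs0]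
    norm_num
  have hq14 : ∀ y, (∑ v, ∑ x, pV v x true * chY x true y) = 1/4 := by
    intro y
    rw [hq y]
    rcases y with _ | _
    · exact hquarter.1
    · exact hquarter.2
  -- the \"q or r\" marginal for arbitrary z
  have hzy : ∀ z y, (∑ v, ∑ x, pV v x z * chY x z y) = 1/4 := by
    intro z y
    rcases z with _ | _
    · exact hr y
    · exact hq14 y
  have hzmass : ∀ z, (∑ v, ∑ x, pV v x z) = 1/2 := by
    intro z
    rcases z with _ | _
    · exact hs0
    · exact h1
  refine ⟨?_, ?_, ?_⟩
  · -- goal (a)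
    intro y z
    have hmid : (∑ v, ∑ x, ∑ z', pV v x z' * chY x z' y) = 1/2 := by
      have e : ∑ v, ∑ x, ∑ z', pV v x z' * chY x z' y
          = (∑ v, ∑ x, pV v x true * chY x true y)
            + (∑ v, ∑ x, pV v x false * chY x false y) := by
        simp [Fintype.sum_bool, Finset.sum_add_distrib]
      rw [e, hq14 y, hr y]
      norm_num
    rw [hmid, hzy z y, hzmass z]
    norm_num
  · -- goal (b) via h4
    intro v y z
    have fact := cmi_fact (fun (v : V) (z y : Bool) => ∑ x, pV v x z * chY x z y)
      (fun v z y => Finset.sum_nonneg fun x _ => mul_nonneg (hpV v x z) (hch x z y)) h4 v z y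
    have hmY : (∑ v', ∑ z', ∑ x, pV v' x z' * chY x z' y) = 1/2 := by
      have e : ∑ v', ∑ z', ∑ x, pV v' x z' * chY x z' y
          = (∑ v', ∑ x, pV v' x true * chY x true y)
            + (∑ v', ∑ x, pV v' x false * chY x false y) := by
        simp only [Fintype.sum_bool, Finset.sum_add_distrib]
        ring
      rw [e, hq14 y, hr y]; norm_num
    rw [hmY, hzy z y] at fact
    have hswap2 : (∑ x, ∑ z', pV v x z' * chY x z' y)
        = ∑ z', ∑ x, pV v x z' * chY x z' y := Finset.sum_comm
    rw [hswap2, hzmass z]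
    linarith
  · -- goal (c) via h3
    have fact3 := cmi_fact (fun (x y : Bool) (c : Bool × V) => pV c.2 x c.1 * chY x c.1 y)
      (fun x y c => mul_nonneg (hpV c.2 x c.1) (hch x c.1 y)) h3
    have hprod : ∀ v, pV v true true * pV v false true = 0 := by
      intro v
      have hf := fact3 true false (true, v)
      simp [chY, Fintype.sum_bool] at hf
      exact mul_eq_zero.mpr hf
    -- rewrite the miJ argument
    have hfun : (fun (v : V) (y : Bool) =>
        (∑ x, pV v x true * chY x true y) / (∑ v', ∑ x, pV v' x true))
        = fun v y => 2 * pV v y true := by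
      funext v y
      rw [hqv v y, h1]
      ring
    rw [hfun]
    unfold miJ
    have hmargY : ∀ y, (∑ v', 2 * pV v' y true) = 1/2 := by
      intro y
      rw [← Finset.mul_sum]
      rcases y with _ | _
      · rw [hquarter.1]; norm_num
      · rw [hquarter.2]; norm_num
    have hterm : ∀ (v : V) (y : Bool), (2 * pV v y true) * Real.logb 2 ((2 * pV v y true) /
        ((∑ y', 2 * pV v y' true) * (∑ v', 2 * pV v' y true))) = 2 * pV v y true := by
      intro v y
      rcases eq_or_lt_of_le (hpV v y true) with h0 | h0
      · rw [← h0]; simp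
      · have hother : pV v (!y) true = 0 := by
          rcases y with _ | _
          · rcases mul_eq_zero.mp (hprod v) with hh | hh
            · exact hh
            · exact absurd hh h0.ne'
          · rcases mul_eq_zero.mp (hprod v) with hh | hh
            · exact absurd hh h0.ne'
            · exact hh
        have hy' : (∑ y', 2 * pV v y' true) = 2 * pV v y true := by
          rw [Fintype.sum_bool]
          rcases y with _ | _ <;> simp only [Bool.not_false, Bool.not_true] at hother <;>
            rw [hother] <;> ring
        rw [hy', hmargY y]
        have harg : (2 * pV v y true) / ((2 * pV v y true) * (1/2)) = 2 := by
          field_simp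
        rw [harg, Real.logb_self_eq_one (by norm_num)]
        ring
    calc ∑ v, ∑ y, (2 * pV v y true) * Real.logb 2 ((2 * pV v y true) /
            ((∑ y', 2 * pV v y' true) * (∑ v', 2 * pV v' y true)))
        = ∑ v, ∑ y : Bool, 2 * pV v y true :=
          Finset.sum_congr rfl fun v _ => Finset.sum_congr rfl fun y _ => hterm v y
      _ = 1 := by
          rw [Finset.sum_comm, Fintype.sum_bool, ← Finset.mul_sum, ← Finset.mul_sum,
            hquarter.1, hquarter.2]
          norm_num
end

section
/- KL–TV comparison for finite distributions: if P and Q are PMFs on a finite set of size at most |Z|^n with P ≪ Q and every positive value of Q is at least (q_min)^n for some q_min ∈ (0,1], then D(P‖Q) ≤ δ_TV(P,Q) · ( n log|Z| − log δ_TV(P,Q) + n log(1/q_min) ), where δ_TV is total variation distance (assuming δ_TV(P,Q) > 0). -/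
open scoped BigOperators

private lemma entdiff (Q P d δ : ℝ) (hQ0 : 0 ≤ Q) (hPd : P = Q + d)
    (hd0 : 0 < d) (hdd : d ≤ δ) (hδ1 : δ ≤ 1) (hQδ : Q ≤ 1 - δ) (hP1 : P ≤ 1) :
    P * Real.log P - Q * Real.log Q ≤ d * (Real.log 2 - Real.log δ) := by
  have hδ0 : 0 < δ := lt_of_lt_of_le hd0 hdd
  have hP0 : 0 < P := by nlinarith
  have hlogδ : Real.log δ ≤ 0 := Real.log_nonpos (le_of_lt hδ0) hδ1
  have hlog2 : (0.6931471803:ℝ) < Real.log 2 := Real.log_two_gt_d9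
  rcases eq_or_lt_of_le hQ0 with hQz | hQpos
  · -- Q = 0
    rw [← hQz]
    have : P * Real.log P ≤ 0 :=
      mul_nonpos_of_nonneg_of_nonpos (le_of_lt hP0) (Real.log_nonpos (le_of_lt hP0) hP1)
    have h2 : 0 ≤ d * (Real.log 2 - Real.log δ) := by nlinarith
    simp; nlinarith
  · rcases le_or_gt P (2 / (Real.exp 1 * δ)) with hcase | hcase
    · -- P small: convexity bound
      have h1 : Real.log (P / Q) ≤ P / Q - 1 := Real.log_le_sub_one_of_pos (by positivity)
      have h2 : Q * Real.log P - Q * Real.log Q ≤ P - Q := by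
        rw [Real.log_div (ne_of_gt hP0) (ne_of_gt hQpos)] at h1
        have := mul_le_mul_of_nonneg_left h1 hQ0
        have hq : Q * (P / Q - 1) = P - Q := by field_simp
        nlinarith
      have h3 : Real.log P ≤ Real.log 2 - 1 - Real.log δ := by
        have : Real.log P ≤ Real.log (2 / (Real.exp 1 * δ)) := Real.log_le_log hP0 hcase
        rw [Real.log_div (by norm_num) (by positivity), Real.log_mul (by positivity) (ne_of_gt hδ0),
          Real.log_exp] at this
        linarith
      have h4 : P * Real.log P - Q * Real.log Q ≤ d * (1 + Real.log P) := by nlinarith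
      nlinarith
    · -- P large: numeric bound
      have he0 : (0:ℝ) < Real.exp 1 := Real.exp_pos 1
      have hfQ : -(Q * Real.log Q) ≤ 1 / Real.exp 1 := by
        have h1 : Real.log (1 / (Q * Real.exp 1)) ≤ 1 / (Q * Real.exp 1) - 1 :=
          Real.log_le_sub_one_of_pos (by positivity)
        rw [Real.log_div (by norm_num) (by positivity), Real.log_mul (ne_of_gt hQpos)
          (by positivity), Real.log_exp, Real.log_one] at h1
        have h2 : -Real.log Q ≤ 1 / (Q * Real.exp 1) := by linarith
        have := mul_le_mul_of_nonneg_left h2 hQ0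
        have hq : Q * (1 / (Q * Real.exp 1)) = 1 / Real.exp 1 := by
          field_simp
        rw [hq] at this
        linarith [this]
      have hfP : P * Real.log P ≤ 0 :=
        mul_nonpos_of_nonneg_of_nonpos (le_of_lt hP0) (Real.log_nonpos (le_of_lt hP0) hP1)
      set r := Real.sqrt (2 / Real.exp 1) with hr
      have hr0 : 0 ≤ r := Real.sqrt_nonneg _
      have hr2 : r ^ 2 = 2 / Real.exp 1 := Real.sq_sqrt (by positivity)
      have he2 : r ^ 2 * Real.exp 1 = 2 := by rw [hr2]; field_simp
      have h2e : 2 / (Real.exp 1 * δ) * (Real.exp 1 * δ) = 2 :=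
        div_mul_cancel₀ _ (by positivity)
      have hd1 : 2 / (Real.exp 1 * δ) - (1 - δ) ≤ d := by
        have : 2 / (Real.exp 1 * δ) < P := hcase
        linarith
      have hkey : 2 * r ≤ 2 / (Real.exp 1 * δ) + δ := by
        nlinarith [sq_nonneg (δ - r), mul_pos he0 hδ0, he2, h2e]
      have hrlb : (0.857:ℝ) ≤ r := by
        have heub : Real.exp 1 < 2.7182818286 := Real.exp_one_lt_d9
        nlinarith [he2, hr0, he0]
      have hdlb : (0.714:ℝ) ≤ d := by linarith
      have helb : (2.7182818283:ℝ) < Real.exp 1 := Real.exp_one_gt_d9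
      have hinv : 1 / Real.exp 1 ≤ 0.368 := by
        rw [div_le_iff₀ he0]; linarith
      nlinarith [hdlb, hlog2, mul_nonneg (le_of_lt hd0) (neg_nonneg.mpr hlogδ)]


open Finset in
/-- KL–TV comparison: for PMFs `P ≪ Q` on a finite set of size at
most `|Z|ⁿ`, with every positive value of `Q` at least `qminⁿ`, the KL divergence is
bounded by `δ·(n log|Z| − log δ + n log(1/qmin))` where `δ` is the total variation. -/
theorem stmt11 {S Zt : Type} [Fintype S] [Fintype Zt]
    (n : ℕ) (hcard : Fintype.card S ≤ Fintype.card Zt ^ n)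
    (P Q : S → ℝ) (hP : ∀ s, 0 ≤ P s) (hP1 : ∑ s, P s = 1)
    (hQ : ∀ s, 0 ≤ Q s) (hQ1 : ∑ s, Q s = 1)
    (hac : ∀ s, Q s = 0 → P s = 0)
    (qmin : ℝ) (hq0 : 0 < qmin) (hq1 : qmin ≤ 1)
    (hqm : ∀ s, Q s ≠ 0 → qmin ^ n ≤ Q s)
    (htv : 0 < (2 : ℝ)⁻¹ * ∑ s, |P s - Q s|) :
    (∑ s, P s * Real.logb 2 (P s / Q s))
      ≤ ((2 : ℝ)⁻¹ * ∑ s, |P s - Q s|) *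
        ((n : ℝ) * Real.logb 2 (Fintype.card Zt)
          - Real.logb 2 ((2 : ℝ)⁻¹ * ∑ s, |P s - Q s|)
          + (n : ℝ) * Real.logb 2 (1 / qmin)) := by
  classical
  set dlt : ℝ := (2 : ℝ)⁻¹ * ∑ s, |P s - Q s| with hdlt
  set A : Finset S := Finset.univ.filter (fun s => Q s < P s) with hA
  -- basic sum identities
  have hsplit : ∑ s ∈ A, (P s - Q s) + ∑ s ∈ univ.filter (fun s => ¬ Q s < P s), (P s - Q s)
      = ∑ s, (P s - Q s) :=
    Finset.sum_filter_add_sum_filter_not univ _ _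
  have hsplitabs : ∑ s ∈ A, |P s - Q s| + ∑ s ∈ univ.filter (fun s => ¬ Q s < P s), |P s - Q s|
      = ∑ s, |P s - Q s| :=
    Finset.sum_filter_add_sum_filter_not univ _ _
  have hsplitQ : ∑ s ∈ A, Q s + ∑ s ∈ univ.filter (fun s => ¬ Q s < P s), Q s = ∑ s, Q s :=
    Finset.sum_filter_add_sum_filter_not univ _ _
  have hPQ0 : ∑ s, (P s - Q s) = 0 := by rw [Finset.sum_sub_distrib, hP1, hQ1]; ring
  have hAabs : ∑ s ∈ A, |P s - Q s| = ∑ s ∈ A, (P s - Q s) := by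
    refine Finset.sum_congr rfl fun s hs => ?_
    rw [hA, Finset.mem_filter] at hs
    exact abs_of_pos (by linarith [hs.2])
  have hAcabs : ∑ s ∈ univ.filter (fun s => ¬ Q s < P s), |P s - Q s|
      = - ∑ s ∈ univ.filter (fun s => ¬ Q s < P s), (P s - Q s) := by
    rw [← Finset.sum_neg_distrib]
    refine Finset.sum_congr rfl fun s hs => ?_
    rw [Finset.mem_filter] at hs
    have : P s ≤ Q s := le_of_not_gt hs.2
    rw [abs_of_nonpos (by linarith)]
  have hδA : ∑ s ∈ A, (P s - Q s) = dlt := by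
    rw [hdlt]
    have h1 : ∑ s ∈ univ.filter (fun s => ¬ Q s < P s), (P s - Q s)
        = - ∑ s ∈ A, (P s - Q s) := by rw [hPQ0] at hsplit; linarith
    rw [← hsplitabs, hAabs, hAcabs, h1]; ring
  have hδ0 : 0 < dlt := htv
  -- P s ≤ 1
  have hPle1 : ∀ s, P s ≤ 1 := by
    intro s
    calc P s ≤ ∑ t, P t := Finset.single_le_sum (fun i _ => hP i) (Finset.mem_univ s)
    _ = 1 := hP1
  -- dlt ≤ 1
  have hδ1 : dlt ≤ 1 := by
    rw [← hδA]
    calc ∑ s ∈ A, (P s - Q s) ≤ ∑ s ∈ A, P s :=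
          Finset.sum_le_sum (fun i _ => by linarith [hQ i])
    _ ≤ ∑ s, P s := Finset.sum_le_sum_of_subset_of_nonneg (Finset.subset_univ _)
          (fun i _ _ => hP i)
    _ = 1 := hP1
  -- Q on A is ≤ 1 - dlt
  have hQAc : dlt ≤ ∑ s ∈ univ.filter (fun s => ¬ Q s < P s), Q s := by
    have h1 : ∑ s ∈ univ.filter (fun s => ¬ Q s < P s), (Q s - P s) = dlt := by
      rw [← hδA]
      have := hsplit; rw [hPQ0] at this
      rw [show ∑ s ∈ univ.filter (fun s => ¬ Q s < P s), (Q s - P s)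
        = - ∑ s ∈ univ.filter (fun s => ¬ Q s < P s), (P s - Q s) by
          rw [← Finset.sum_neg_distrib]; exact Finset.sum_congr rfl fun s _ => by ring]
      linarith
    rw [← h1]
    exact Finset.sum_le_sum (fun i _ => by linarith [hP i])
  have hQs : ∀ s ∈ A, Q s ≤ 1 - dlt := by
    intro s hs
    have h1 : Q s ≤ ∑ t ∈ A, Q t := Finset.single_le_sum (fun i _ => hQ i) hs
    have h2 : ∑ t ∈ A, Q t ≤ 1 - dlt := by
      rw [hQ1] at hsplitQ; linarith
    linarith
  have hds : ∀ s ∈ A, P s - Q s ≤ dlt := by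
    intro s hs
    rw [← hδA]
    refine Finset.single_le_sum (f := fun i => P i - Q i) (fun i hi => ?_) hs
    rw [hA, Finset.mem_filter] at hi
    linarith [hi.2]
  -- card ≥ 2
  have hcard2 : 2 ≤ Fintype.card Zt ^ n := by
    have hex : ∃ s, P s ≠ Q s := by
      by_contra h
      push_neg at h
      have : ∑ s, |P s - Q s| = 0 := Finset.sum_eq_zero fun s _ => by rw [h s]; simp
      rw [hdlt, this] at hδ0; simp at hδ0
    obtain ⟨s0, hs0⟩ := hex
    have hex2 : ∃ s1, s1 ≠ s0 := by
      by_contra h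
      push_neg at h
      have : ∑ s, (P s - Q s) = P s0 - Q s0 := by
        refine Finset.sum_eq_single_of_mem s0 (Finset.mem_univ _) fun b _ hb => ?_
        rw [h b] at hb; exact absurd rfl hb
      rw [hPQ0] at this
      exact hs0 (by linarith)
    obtain ⟨s1, hs1⟩ := hex2
    have h2S : 1 < Fintype.card S := Fintype.one_lt_card_iff.mpr ⟨s1, s0, hs1⟩
    omega
  have hln2Z : Real.log 2 ≤ (n : ℝ) * Real.log (Fintype.card Zt) := by
    have h1 : ((2:ℕ):ℝ) ≤ (((Fintype.card Zt ^ n : ℕ)):ℝ) := by exact_mod_cast hcard2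
    push_cast at h1
    have := Real.log_le_log (by norm_num : (0:ℝ) < 2) h1
    rwa [Real.log_pow] at this
  -- key constant
  set K : ℝ := (n : ℝ) * Real.log (Fintype.card Zt) - Real.log dlt
      + (n : ℝ) * Real.log (1 / qmin) with hK
  -- termwise bound
  have hterm : ∀ s ∈ univ, P s * Real.log (P s / Q s)
      ≤ (if Q s < P s then (P s - Q s) * K else 0) := by
    intro s _
    by_cases hs : Q s < P s
    · rw [if_pos hs]
      have hsA : s ∈ A := by rw [hA, Finset.mem_filter]; exact ⟨Finset.mem_univ _, hs⟩
      have hQpos : 0 < Q s := by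
        rcases eq_or_lt_of_le (hQ s) with h | h
        · exfalso; have := hac s h.symm; rw [this, ← h] at hs; exact lt_irrefl 0 hs
        · exact h
      have hPpos : 0 < P s := lt_trans hQpos hs
      have hid : P s * Real.log (P s / Q s)
          = (P s * Real.log (P s) - Q s * Real.log (Q s)) + (P s - Q s) * (- Real.log (Q s)) := by
        rw [Real.log_div (ne_of_gt hPpos) (ne_of_gt hQpos)]; ring
      have h1 : P s * Real.log (P s) - Q s * Real.log (Q s)
          ≤ (P s - Q s) * (Real.log 2 - Real.log dlt) :=
        entdiff (Q s) (P s) (P s - Q s) dlt (hQ s) (by ring) (by linarith)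
          (hds s hsA) hδ1 (hQs s hsA) (hPle1 s)
      have h2 : - Real.log (Q s) ≤ (n : ℝ) * Real.log (1 / qmin) := by
        have hqn : qmin ^ n ≤ Q s := hqm s (ne_of_gt hQpos)
        have := Real.log_le_log (by positivity) hqn
        rw [Real.log_pow] at this
        rw [show (1:ℝ)/qmin = qmin⁻¹ by ring, Real.log_inv]
        nlinarith
      have hd0' : (0:ℝ) ≤ P s - Q s := by linarith
      calc P s * Real.log (P s / Q s)
          ≤ (P s - Q s) * (Real.log 2 - Real.log dlt)
            + (P s - Q s) * ((n : ℝ) * Real.log (1 / qmin)) := by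
            rw [hid]
            exact add_le_add h1 (mul_le_mul_of_nonneg_left h2 hd0')
        _ ≤ (P s - Q s) * K := by
            rw [hK]
            nlinarith [mul_le_mul_of_nonneg_left hln2Z hd0']
    · rw [if_neg hs]
      have hPQ : P s ≤ Q s := le_of_not_gt hs
      rcases eq_or_lt_of_le (hP s) with h | h
      · rw [← h]; simp
      · have : P s / Q s ≤ 1 := by
          rw [div_le_one (lt_of_lt_of_le h hPQ)]; exact hPQ
        exact mul_nonpos_of_nonneg_of_nonpos (le_of_lt h)
          (Real.log_nonpos (div_nonneg (hP s) (hQ s)) this)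
  -- sum up, in nats
  have hnat : ∑ s, P s * Real.log (P s / Q s) ≤ dlt * K := by
    calc ∑ s, P s * Real.log (P s / Q s)
        ≤ ∑ s, (if Q s < P s then (P s - Q s) * K else 0) := Finset.sum_le_sum hterm
      _ = ∑ s ∈ A, (P s - Q s) * K := (Finset.sum_filter _ _).symm
      _ = (∑ s ∈ A, (P s - Q s)) * K := by rw [Finset.sum_mul]
      _ = dlt * K := by rw [hδA]
  -- convert to logb
  have hlog2pos : (0:ℝ) < Real.log 2 := Real.log_pos (by norm_num)
  have hLHS : ∑ s, P s * Real.logb 2 (P s / Q s)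
      = (∑ s, P s * Real.log (P s / Q s)) / Real.log 2 := by
    rw [Finset.sum_div]
    exact Finset.sum_congr rfl fun s _ => by rw [Real.logb, mul_div_assoc]
  have hRHS : dlt * ((n : ℝ) * Real.logb 2 (Fintype.card Zt) - Real.logb 2 dlt
      + (n : ℝ) * Real.logb 2 (1 / qmin)) = dlt * K / Real.log 2 := by
    rw [hK, Real.logb, Real.logb, Real.logb]; field_simp; try ring
  rw [hLHS, hRHS]
  exact (div_le_div_iff_of_pos_right hlog2pos).mpr hnat
end
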